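/- arXiv:0803.2112 — 5 statements merged into one kernel-verified Lean document; each statement's English description precedes it below -/
import Mathlib

section
/- For all n, i > 0 with i ≤ ⌊n/2⌋, α(n,i) = Σ_{h=2i−1}^{n−1} α(h, i−1). -/
open Finset Filter Topology

/-- Cells of a Young diagram given by its list of column lengths:
`(c, r)` means row `r` of column `c`. -/
def Cells (lam : List ℕ) : Set (ℕ × ℕ) :=
  {p | p.1 < lam.length ∧ p.2 < lam.getD p.1 0}

/-- `T` is a standard Young tableau of (column-lengths) shape `lam`:
it is a bijection from the cells onto `{1, …, lam.sum}`, strictly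
increasing along each column and each row, and `0` outside the diagram. -/
def IsSYT (lam : List ℕ) (T : ℕ × ℕ → ℕ) : Prop :=
  Set.BijOn T (Cells lam) (Set.Icc 1 lam.sum) ∧
  (∀ p ∈ Cells lam, ∀ q ∈ Cells lam, p.1 = q.1 → p.2 < q.2 → T p < T q) ∧
  (∀ p ∈ Cells lam, ∀ q ∈ Cells lam, p.2 = q.2 → p.1 < q.1 → T p < T q) ∧
  (∀ p, p ∉ Cells lam → T p = 0)

/-- The number of standard Young tableaux of a fixed column-shape. -/
noncomputable def sytCount (lam : List ℕ) : ℕ :=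
  Nat.card {T : ℕ × ℕ → ℕ // IsSYT lam T}

/-- `alpha n i` : the number of standard Young tableaux on `n` cells whose
shape has two columns of lengths `n - i` and `i`. -/
noncomputable def alpha (n i : ℕ) : ℕ := sytCount [n - i, i]

/-!
Let `T` be a standard tableau with columns of lengths `a ≥ b > 0` and let `m = T (1, b - 1)` be
the entry at the foot of the short column. Injecting suitable sets of cells into intervals of
values shows that the entries below `m` fill exactly the first `m - b` cells of the long column
and the first `b - 1` cells of the short one, while every cell `(0, r)` with `m ≤ r + b` carries
`r + b + 1`. Hence `T` is the same as a value `m ∈ [2b, a + b]` together with a standard tableau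
of shape `(m - b, b - 1)`, and summing over `m = h + 1` gives the recursion.
-/

namespace IsSYT

variable {lam mu : List ℕ} {T : ℕ × ℕ → ℕ}

theorem eq_of_eqOn {T' : ℕ × ℕ → ℕ} (hT : IsSYT lam T) (hT' : IsSYT lam T')
    (h : Set.EqOn T T' (Cells lam)) : T = T' := by
  funext p
  by_cases hp : p ∈ Cells lam
  · exact h hp
  · rw [hT.2.2.2 p hp, hT'.2.2.2 p hp]

theorem card_le (hT : IsSYT lam T) {S : Finset (ℕ × ℕ)} (hS : (S : Set (ℕ × ℕ)) ⊆ Cells lam)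
    {lo hi : ℕ} (hval : ∀ p ∈ S, lo ≤ T p ∧ T p ≤ hi) : #S ≤ hi + 1 - lo := by
  rw [← Nat.card_Icc]
  exact card_le_card_of_injOn T (fun p hp => mem_Icc.2 (hval p hp)) (hT.1.injOn.mono hS)

theorem indicator (hT : IsSYT lam T) (hsub : Cells mu ⊆ Cells lam) (hsum : mu.sum ≤ lam.sum)
    (hcells : ∀ p ∈ Cells lam, p ∈ Cells mu ↔ T p ≤ mu.sum) :
    IsSYT mu ((Cells mu).indicator T) := by
  have hbij : Set.BijOn T (Cells mu) (Set.Icc 1 mu.sum) := by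
    have h := hT.1.inter_mapsTo (t₂ := Set.Iic mu.sum)
      (fun p hp => (hcells p (hsub hp)).1 hp) (fun p hp => (hcells p hp.1).2 hp.2)
    have hval : Set.Icc 1 lam.sum ∩ Set.Iic mu.sum = Set.Icc 1 mu.sum := by
      ext v
      simp only [Set.mem_inter_iff, Set.mem_Icc, Set.mem_Iic]
      omega
    rwa [Set.inter_eq_right.2 hsub, hval] at h
  refine ⟨hbij.congr fun p hp => (Set.indicator_of_mem hp T).symm, fun p hp q hq => ?_,
    fun p hp q hq => ?_, fun p hp => Set.indicator_of_notMem hp T⟩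
  · rw [Set.indicator_of_mem hp, Set.indicator_of_mem hq]
    exact hT.2.1 p (hsub hp) q (hsub hq)
  · rw [Set.indicator_of_mem hp, Set.indicator_of_mem hq]
    exact hT.2.2.1 p (hsub hp) q (hsub hq)

end IsSYT

theorem finite_cells (lam : List ℕ) : (Cells lam).Finite := by
  refine ((Set.finite_Iio lam.length).prod (Set.finite_Iic lam.sum)).subset ?_
  rintro ⟨c, r⟩ ⟨hc, hr⟩
  refine ⟨hc, le_of_lt (hr.trans_le ?_)⟩
  rw [List.getD_eq_getElem _ _ hc]
  exact List.le_sum_of_mem (List.getElem_mem hc)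

instance (lam : List ℕ) : Finite {T : ℕ × ℕ → ℕ // IsSYT lam T} := by
  have := (finite_cells lam).to_subtype
  refine Finite.of_injective
    (fun T : {T // IsSYT lam T} => T.2.1.mapsTo.restrict T.1 (Cells lam) (Set.Icc 1 lam.sum))
    fun T T' h => Subtype.ext (T.2.eq_of_eqOn T'.2 fun p hp => ?_)
  simpa using congrArg Subtype.val (congrFun h ⟨p, hp⟩)

theorem mem_cells_pair {a b c r : ℕ} :
    (c, r) ∈ Cells [a, b] ↔ c = 0 ∧ r < a ∨ c = 1 ∧ r < b := by
  rcases c with _ | _ | c <;> simp [Cells]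

theorem corner_mem_cells {a b : ℕ} (hb : 0 < b) : (1, b - 1) ∈ Cells [a, b] :=
  mem_cells_pair.2 (.inr ⟨rfl, Nat.sub_lt hb one_pos⟩)

def twoColumns (s t : Finset ℕ) : Finset (ℕ × ℕ) := {0} ×ˢ s ∪ {1} ×ˢ t

theorem mem_twoColumns {s t : Finset ℕ} {c r : ℕ} :
    (c, r) ∈ twoColumns s t ↔ c = 0 ∧ r ∈ s ∨ c = 1 ∧ r ∈ t := by
  simp [twoColumns, and_comm, eq_comm]

theorem card_twoColumns (s t : Finset ℕ) : #(twoColumns s t) = #s + #t := by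
  rw [twoColumns, card_union_of_disjoint (by simp [disjoint_left]), card_product,
    card_product, card_singleton, card_singleton, one_mul, one_mul]

theorem coe_twoColumns_range (a b : ℕ) :
    (twoColumns (range a) (range b) : Set (ℕ × ℕ)) = Cells [a, b] := by
  ext ⟨c, r⟩
  rw [mem_coe, mem_twoColumns, mem_cells_pair, mem_range, mem_range]

namespace IsSYT

variable {a b : ℕ} {T : ℕ × ℕ → ℕ}

theorem apply_mem_Icc (hT : IsSYT [a, b] T) {p : ℕ × ℕ} (hp : p ∈ Cells [a, b]) :
    1 ≤ T p ∧ T p ≤ a + b := by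
  simpa using hT.1.mapsTo hp

theorem corner_le (hT : IsSYT [a, b] T) (hb : 0 < b) : T (1, b - 1) ≤ a + b :=
  (hT.apply_mem_Icc (corner_mem_cells hb)).2

theorem left_lt_left (hT : IsSYT [a, b] T) {r r' : ℕ} (h : r < r') (hr' : r' < a) :
    T (0, r) < T (0, r') :=
  hT.2.1 _ (mem_cells_pair.2 (.inl ⟨rfl, h.trans hr'⟩)) _ (mem_cells_pair.2 (.inl ⟨rfl, hr'⟩))
    rfl h

theorem right_lt_right (hT : IsSYT [a, b] T) {j j' : ℕ} (h : j < j') (hj' : j' < b) :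
    T (1, j) < T (1, j') :=
  hT.2.1 _ (mem_cells_pair.2 (.inr ⟨rfl, h.trans hj'⟩)) _ (mem_cells_pair.2 (.inr ⟨rfl, hj'⟩))
    rfl h

theorem left_lt_right (hT : IsSYT [a, b] T) {r : ℕ} (ha : r < a) (hb : r < b) :
    T (0, r) < T (1, r) :=
  hT.2.2.1 _ (mem_cells_pair.2 (.inl ⟨rfl, ha⟩)) _ (mem_cells_pair.2 (.inr ⟨rfl, hb⟩)) rfl one_pos

theorem add_lt_corner_of_lt_corner (hT : IsSYT [a, b] T) (hb : 0 < b) {r : ℕ} (hr : r < a)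
    (h : T (0, r) < T (1, b - 1)) : r + b < T (1, b - 1) := by
  have hcard := hT.card_le (S := twoColumns (range (r + 1)) (range (b - 1)))
    (lo := 1) (hi := T (1, b - 1) - 1) ?_ ?_
  · rw [card_twoColumns, card_range, card_range] at hcard
    omega
  · rintro ⟨c, r'⟩ hp
    rw [mem_coe, mem_twoColumns, mem_range, mem_range] at hp
    exact mem_cells_pair.2 (by omega)
  · rintro ⟨c, r'⟩ hp
    rw [mem_twoColumns, mem_range, mem_range] at hp
    refine ⟨(hT.apply_mem_Icc (mem_cells_pair.2 (by omega))).1, ?_⟩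
    rcases hp with ⟨rfl, hr'⟩ | ⟨rfl, hr'⟩
    · rcases (Nat.lt_succ_iff.1 hr').lt_or_eq with hlt | rfl
      · have := hT.left_lt_left hlt hr
        omega
      · omega
    · have := hT.right_lt_right (show r' < b - 1 from hr') (by omega)
      omega

theorem left_ne_corner (hT : IsSYT [a, b] T) (hb : 0 < b) {r : ℕ} (hr : r < a) :
    T (0, r) ≠ T (1, b - 1) := fun h => by
  simpa using hT.1.injOn (mem_cells_pair.2 (.inl ⟨rfl, hr⟩))
    (corner_mem_cells hb) h

theorem left_eq_of_corner_lt (hT : IsSYT [a, b] T) (hb : 0 < b) {r : ℕ} (hr : r < a)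
    (h : T (1, b - 1) < T (0, r)) : T (0, r) = r + b + 1 := by
  have hlower := hT.card_le (S := twoColumns (range r) (range b))
    (lo := 1) (hi := T (0, r) - 1) ?_ ?_
  · have hupper := hT.card_le (S := twoColumns (Ico r a) ∅)
      (lo := T (0, r)) (hi := a + b) ?_ ?_
    · rw [card_twoColumns, Nat.card_Ico, card_empty] at hupper
      rw [card_twoColumns, card_range, card_range] at hlower
      omega
    · rintro ⟨c, r'⟩ hp
      rw [mem_coe, mem_twoColumns, mem_Ico] at hp
      exact mem_cells_pair.2 (by simp_all)
    · rintro ⟨c, r'⟩ hp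
      rw [mem_twoColumns, mem_Ico] at hp
      obtain ⟨rfl, hrr', hr'⟩ : c = 0 ∧ r ≤ r' ∧ r' < a := by simpa using hp
      refine ⟨?_, (hT.apply_mem_Icc (mem_cells_pair.2 (.inl ⟨rfl, hr'⟩))).2⟩
      rcases hrr'.lt_or_eq with hlt | rfl
      · exact (hT.left_lt_left hlt hr').le
      · exact le_rfl
  · rintro ⟨c, r'⟩ hp
    rw [mem_coe, mem_twoColumns, mem_range, mem_range] at hp
    exact mem_cells_pair.2 (by omega)
  · rintro ⟨c, r'⟩ hp
    rw [mem_twoColumns, mem_range, mem_range] at hp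
    refine ⟨(hT.apply_mem_Icc (mem_cells_pair.2 (by omega))).1, ?_⟩
    rcases hp with ⟨rfl, hr'⟩ | ⟨rfl, hr'⟩
    · have := hT.left_lt_left hr' hr
      omega
    · rcases (Nat.le_sub_one_of_lt hr').lt_or_eq with hlt | rfl
      · have := hT.right_lt_right hlt (Nat.sub_lt hb one_pos)
        omega
      · omega

theorem left_lt_corner_iff (hT : IsSYT [a, b] T) (hb : 0 < b) {r : ℕ} (hr : r < a) :
    T (0, r) < T (1, b - 1) ↔ r + b < T (1, b - 1) := by
  refine ⟨hT.add_lt_corner_of_lt_corner hb hr, fun h => ?_⟩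
  by_contra hge
  have hlt := (not_lt.1 hge).lt_of_ne (hT.left_ne_corner hb hr).symm
  have := hT.left_eq_of_corner_lt hb hr hlt
  omega

theorem left_eq_of_corner_le (hT : IsSYT [a, b] T) (hb : 0 < b) {r : ℕ} (hr : r < a)
    (h : T (1, b - 1) ≤ r + b) : T (0, r) = r + b + 1 := by
  have hge : T (1, b - 1) ≤ T (0, r) := not_lt.1 fun hlt =>
    (hT.add_lt_corner_of_lt_corner hb hr hlt).not_ge h
  exact hT.left_eq_of_corner_lt hb hr (hge.lt_of_ne (hT.left_ne_corner hb hr).symm)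

theorem two_mul_le_corner (hT : IsSYT [a, b] T) (hb : 0 < b) (hba : b ≤ a) :
    2 * b ≤ T (1, b - 1) := by
  have := (hT.left_lt_corner_iff hb (r := b - 1) (by omega)).1
    (hT.left_lt_right (by omega) (by omega))
  omega

end IsSYT

theorem isSYT_pair_of_surjOn {a b : ℕ} {T : ℕ × ℕ → ℕ}
    (hmaps : Set.MapsTo T (Cells [a, b]) (Set.Icc 1 (a + b)))
    (hsurj : Set.SurjOn T (Cells [a, b]) (Set.Icc 1 (a + b)))
    (hleft : ∀ r, r + 1 < a → T (0, r) < T (0, r + 1))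
    (hright : ∀ j, j + 1 < b → T (1, j) < T (1, j + 1))
    (hrow : ∀ r, r < a → r < b → T (0, r) < T (1, r))
    (hout : ∀ p ∉ Cells [a, b], T p = 0) : IsSYT [a, b] T := by
  have hinj : Set.InjOn T (Cells [a, b]) := by
    rw [← coe_twoColumns_range] at hmaps hsurj ⊢
    rw [← coe_Icc] at hmaps hsurj
    exact injOn_of_surjOn_of_card_le T hmaps hsurj
      (by rw [card_twoColumns, card_range, card_range, Nat.card_Icc, Nat.add_sub_cancel])
  have hmono {c n : ℕ} (h : ∀ r, r + 1 < n → T (c, r) < T (c, r + 1)) :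
      StrictMonoOn (fun r => T (c, r)) (Set.Iic (n - 1)) :=
    strictMonoOn_Iic_of_lt_succ fun r hr => by
      rw [Order.succ_eq_add_one]
      exact h r (by omega)
  refine ⟨⟨hmaps, hinj, hsurj⟩, ?_, ?_, hout⟩
  · rintro ⟨c, r⟩ hp ⟨c', r'⟩ hq (rfl : c = c') (hrr' : r < r')
    rcases mem_cells_pair.1 hp with ⟨rfl, -⟩ | ⟨rfl, -⟩ <;>
      rcases mem_cells_pair.1 hq with ⟨h, hr'⟩ | ⟨h, hr'⟩ <;> try simp at h
    · exact hmono hleft (show r ≤ a - 1 by omega) (show r' ≤ a - 1 by omega) hrr'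
    · exact hmono hright (show r ≤ b - 1 by omega) (show r' ≤ b - 1 by omega) hrr'
  · rintro ⟨c, r⟩ hp ⟨c', r'⟩ hq (rfl : r = r') (hcc' : c < c')
    rcases mem_cells_pair.1 hp with ⟨rfl, hr⟩ | ⟨rfl, -⟩ <;>
      rcases mem_cells_pair.1 hq with ⟨rfl, -⟩ | ⟨rfl, hr'⟩ <;> try omega
    exact hrow r hr hr'

theorem IsSYT.restrict_below_corner {a b : ℕ} {T : ℕ × ℕ → ℕ} (hT : IsSYT [a, b] T)
    (hb : 0 < b) (hba : b ≤ a) :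
    IsSYT [T (1, b - 1) - b, b - 1] ((Cells [T (1, b - 1) - b, b - 1]).indicator T) := by
  have hcorner := hT.corner_le hb
  have h2b := hT.two_mul_le_corner hb hba
  refine hT.indicator ?_ (by simp; omega) ?_
  · rintro ⟨c, r⟩ hp
    rw [mem_cells_pair] at hp ⊢
    omega
  · rintro ⟨c, r⟩ hp
    rw [mem_cells_pair, List.sum_cons, List.sum_cons, List.sum_nil]
    rcases mem_cells_pair.1 hp with ⟨rfl, hr⟩ | ⟨rfl, hr⟩
    · have := hT.left_lt_corner_iff hb hr
      omega
    · rcases (Nat.le_sub_one_of_lt hr).lt_or_eq with hlt | rfl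
      · have := hT.right_lt_right hlt (Nat.sub_lt hb one_pos)
        omega
      · omega

noncomputable def extendTableau (a b m : ℕ) (T' : ℕ × ℕ → ℕ) : ℕ × ℕ → ℕ :=
  (Cells [a, b]).indicator fun p =>
    if p = (1, b - 1) then m else if p.1 = 0 ∧ m ≤ p.2 + b then p.2 + b + 1 else T' p

section extendTableau

variable {a b m : ℕ} {T' : ℕ × ℕ → ℕ}

theorem extendTableau_corner (hb : 0 < b) : extendTableau a b m T' (1, b - 1) = m := by
  rw [extendTableau, Set.indicator_of_mem (corner_mem_cells hb), if_pos rfl]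

theorem extendTableau_left_of_le {r : ℕ} (hr : r < a) (h : m ≤ r + b) :
    extendTableau a b m T' (0, r) = r + b + 1 := by
  rw [extendTableau, Set.indicator_of_mem (mem_cells_pair.2 (.inl ⟨rfl, hr⟩)), if_neg (by simp),
    if_pos ⟨rfl, h⟩]

theorem extendTableau_left_of_lt {r : ℕ} (hr : r < a) (h : r + b < m) :
    extendTableau a b m T' (0, r) = T' (0, r) := by
  rw [extendTableau, Set.indicator_of_mem (mem_cells_pair.2 (.inl ⟨rfl, hr⟩)), if_neg (by simp),
    if_neg (by simp; omega)]

theorem extendTableau_right_of_lt {j : ℕ} (hj : j + 1 < b) :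
    extendTableau a b m T' (1, j) = T' (1, j) := by
  rw [extendTableau, Set.indicator_of_mem (mem_cells_pair.2 (.inr ⟨rfl, by omega⟩)),
    if_neg (by simp; omega), if_neg (by simp)]

theorem extendTableau_of_mem (hm : m ≤ a + b) {p : ℕ × ℕ} (hp : p ∈ Cells [m - b, b - 1]) :
    extendTableau a b m T' p = T' p := by
  obtain ⟨c, r⟩ := p
  rcases mem_cells_pair.1 hp with ⟨rfl, hr⟩ | ⟨rfl, hr⟩
  · exact extendTableau_left_of_lt (by omega) (by omega)
  · exact extendTableau_right_of_lt (by omega)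

theorem mapsTo_extendTableau (hT' : IsSYT [m - b, b - 1] T') (hb : 0 < b) (h2b : 2 * b ≤ m)
    (hm : m ≤ a + b) :
    Set.MapsTo (extendTableau a b m T') (Cells [a, b]) (Set.Icc 1 (a + b)) := by
  rintro ⟨c, r⟩ hp
  rw [Set.mem_Icc]
  rcases mem_cells_pair.1 hp with ⟨rfl, hr⟩ | ⟨rfl, hr⟩
  · by_cases hrm : r + b < m
    · rw [extendTableau_left_of_lt hr hrm]
      have := hT'.apply_mem_Icc (p := (0, r)) (mem_cells_pair.2 (.inl ⟨rfl, by omega⟩))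
      omega
    · rw [extendTableau_left_of_le hr (by omega)]
      omega
  · rcases (Nat.le_sub_one_of_lt hr).lt_or_eq with hlt | rfl
    · rw [extendTableau_right_of_lt (by omega)]
      have := hT'.apply_mem_Icc (mem_cells_pair.2 (.inr ⟨rfl, hlt⟩))
      omega
    · rw [extendTableau_corner hb]
      omega

theorem surjOn_extendTableau (hT' : IsSYT [m - b, b - 1] T') (hb : 0 < b) (h2b : 2 * b ≤ m)
    (hm : m ≤ a + b) :
    Set.SurjOn (extendTableau a b m T') (Cells [a, b]) (Set.Icc 1 (a + b)) := by
  intro v hv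
  rw [Set.mem_Icc] at hv
  rcases lt_trichotomy v m with hlt | rfl | hgt
  · obtain ⟨p, hp, rfl⟩ := hT'.1.surjOn (show v ∈ Set.Icc 1 [m - b, b - 1].sum by
      simp only [Set.mem_Icc, List.sum_cons, List.sum_nil]
      omega)
    refine ⟨p, ?_, extendTableau_of_mem hm hp⟩
    obtain ⟨c, r⟩ := p
    rw [mem_cells_pair] at hp ⊢
    omega
  · exact ⟨(1, b - 1), corner_mem_cells hb, extendTableau_corner hb⟩
  · refine ⟨(0, v - b - 1), mem_cells_pair.2 (.inl ⟨rfl, by omega⟩), ?_⟩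
    rw [extendTableau_left_of_le (by omega) (by omega)]
    omega

theorem isSYT_extendTableau (hT' : IsSYT [m - b, b - 1] T') (hb : 0 < b) (h2b : 2 * b ≤ m)
    (hm : m ≤ a + b) : IsSYT [a, b] (extendTableau a b m T') := by
  refine isSYT_pair_of_surjOn (mapsTo_extendTableau hT' hb h2b hm)
    (surjOn_extendTableau hT' hb h2b hm)
    ?_ ?_ ?_ fun p hp => Set.indicator_of_notMem hp _
  · intro r hr
    by_cases hrm : r + 1 + b < m
    · rw [extendTableau_left_of_lt (by omega) (by omega), extendTableau_left_of_lt hr hrm]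
      exact hT'.left_lt_left (Nat.lt_succ_self r) (by omega)
    · rw [extendTableau_left_of_le hr (by omega)]
      by_cases hrm' : r + b < m
      · rw [extendTableau_left_of_lt (by omega) hrm']
        have := hT'.apply_mem_Icc (p := (0, r)) (mem_cells_pair.2 (.inl ⟨rfl, by omega⟩))
        omega
      · rw [extendTableau_left_of_le (by omega) (by omega)]
        omega
  · intro j hj
    rw [extendTableau_right_of_lt hj]
    by_cases hjb : j + 2 < b
    · rw [extendTableau_right_of_lt hjb]
      exact hT'.right_lt_right (Nat.lt_succ_self j) (by omega)
    · rw [show j + 1 = b - 1 by omega, extendTableau_corner hb]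
      have := hT'.apply_mem_Icc (p := (1, j)) (mem_cells_pair.2 (.inr ⟨rfl, by omega⟩))
      omega
  · intro r hra hrb
    rw [extendTableau_left_of_lt hra (by omega)]
    by_cases hrb' : r + 1 < b
    · rw [extendTableau_right_of_lt hrb']
      exact hT'.left_lt_right (by omega) (by omega)
    · rw [show r = b - 1 by omega, extendTableau_corner hb]
      have := hT'.apply_mem_Icc (p := (0, b - 1)) (mem_cells_pair.2 (.inl ⟨rfl, by omega⟩))
      omega

end extendTableau

theorem extendTableau_restrict_below_corner {a b : ℕ} {T : ℕ × ℕ → ℕ} (hT : IsSYT [a, b] T)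
    (hb : 0 < b) (hba : b ≤ a) :
    extendTableau a b (T (1, b - 1)) ((Cells [T (1, b - 1) - b, b - 1]).indicator T) = T := by
  refine (isSYT_extendTableau (hT.restrict_below_corner hb hba) hb (hT.two_mul_le_corner hb hba)
    (hT.corner_le hb)).eq_of_eqOn hT ?_
  rintro ⟨c, r⟩ hp
  rcases mem_cells_pair.1 hp with ⟨rfl, hr⟩ | ⟨rfl, hr⟩
  · by_cases hrm : r + b < T (1, b - 1)
    · rw [extendTableau_left_of_lt hr hrm,
        Set.indicator_of_mem (mem_cells_pair.2 (.inl ⟨rfl, by omega⟩))]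
    · rw [extendTableau_left_of_le hr (by omega), hT.left_eq_of_corner_le hb hr (by omega)]
  · rcases (Nat.le_sub_one_of_lt hr).lt_or_eq with hlt | rfl
    · rw [extendTableau_right_of_lt (by omega),
        Set.indicator_of_mem (mem_cells_pair.2 (.inr ⟨rfl, hlt⟩))]
    · exact extendTableau_corner hb

theorem indicator_extendTableau {a b m : ℕ} {T' : ℕ × ℕ → ℕ} (hT' : IsSYT [m - b, b - 1] T')
    (hm : m ≤ a + b) : (Cells [m - b, b - 1]).indicator (extendTableau a b m T') = T' := by
  funext p
  by_cases hp : p ∈ Cells [m - b, b - 1]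
  · rw [Set.indicator_of_mem hp, extendTableau_of_mem hm hp]
  · rw [Set.indicator_of_notMem hp, hT'.2.2.2 p hp]

theorem card_corner_fiber {a b m : ℕ} (hb : 0 < b) (hba : b ≤ a) (h2b : 2 * b ≤ m)
    (hm : m ≤ a + b) :
    Nat.card {T : {T : ℕ × ℕ → ℕ // IsSYT [a, b] T} // T.1 (1, b - 1) = m} =
      sytCount [m - b, b - 1] :=
  Nat.card_congr
    { toFun := fun T => ⟨(Cells [m - b, b - 1]).indicator T.1.1,
        by obtain ⟨⟨T, hT⟩, rfl⟩ := T; exact hT.restrict_below_corner hb hba⟩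
      invFun := fun T' => ⟨⟨extendTableau a b m T'.1, isSYT_extendTableau T'.2 hb h2b hm⟩,
        extendTableau_corner hb⟩
      left_inv := fun ⟨⟨T, hT⟩, hTm⟩ => by
        subst hTm
        exact Subtype.ext (Subtype.ext (extendTableau_restrict_below_corner hT hb hba))
      right_inv := fun T' => Subtype.ext (indicator_extendTableau T'.2 hm) }

theorem Finite.card_eq_sum_card_fiberwise {α : Type*} [Finite α] (f : α → ℕ) {t : Finset ℕ}
    (h : ∀ x, f x ∈ t) : Nat.card α = ∑ m ∈ t, Nat.card {x // f x = m} := by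
  have := Fintype.ofFinite α
  rw [Nat.card_eq_fintype_card, ← card_univ, Finset.card_eq_sum_card_fiberwise fun x _ => h x]
  refine sum_congr rfl fun m _ => ?_
  rw [Nat.card_eq_fintype_card, Fintype.card_subtype]

theorem sytCount_pair {a b : ℕ} (hb : 0 < b) (hba : b ≤ a) :
    sytCount [a, b] = ∑ m ∈ Icc (2 * b) (a + b), sytCount [m - b, b - 1] := by
  rw [sytCount, Finite.card_eq_sum_card_fiberwise (fun T => T.1 (1, b - 1)) fun T =>
    mem_Icc.2 ⟨T.2.two_mul_le_corner hb hba, T.2.corner_le hb⟩]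
  exact sum_congr rfl fun m hm => card_corner_fiber hb hba (mem_Icc.1 hm).1 (mem_Icc.1 hm).2

theorem stmt1_general (n i : ℕ) (hi : 0 < i) (hi' : i ≤ n / 2) :
    alpha n i = ∑ h ∈ Finset.Icc (2 * i - 1) (n - 1), alpha h (i - 1) := by
  rw [alpha, sytCount_pair hi (by omega), Nat.sub_add_cancel (by omega : i ≤ n)]
  have hshift : Icc (2 * i) n = (Icc (2 * i - 1) (n - 1)).map (addRightEmbedding 1) := by
    rw [map_add_right_Icc]
    congr 1 <;> omega
  rw [hshift, sum_map]
  refine sum_congr rfl fun h _ => ?_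
  rw [alpha, addRightEmbedding_apply, show h + 1 - i = h - (i - 1) by omega]

theorem stmt1 (n i : ℕ) (hn : 0 < n) (hi : 0 < i) (hi' : i ≤ n / 2) :
    alpha n i = ∑ h ∈ Finset.Icc (2 * i - 1) (n - 1), alpha h (i - 1) :=
  stmt1_general n i hi hi'
end

section
/- For n ≥ 1, τ₂(n) = 2·τ₂(n−1) − E(n−1)·C_{(n−1)/2}, where E(m) = 1 if m is even and 0 otherwise, and C_k is the k-th Catalan number. -/
/-!
Reading the entries `1, …, n` of a standard Young tableau with at most two columns in increasing
order and recording `U` for an entry in the first column and `D` for one in the second gives a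
ballot word of length `n`, and conversely the `r`-th occurrence of a letter in a ballot word
says where to put the corresponding entry: row `r` of that letter's column. So `τ₂(n)` counts
ballot words of length `n`. Every ballot word of length `m + 1` is a ballot word of length `m`
followed by `U` or `D`, and only the balanced words (the Dyck words, `C_{m/2}` of them when `m`
is even and none otherwise) cannot be followed by `D`.
-/

open Finset Filter Topology

/-- `tau s n` : the number of standard Young tableaux on `n` cells whose
shape has at most `s` columns. -/
noncomputable def tau (s n : ℕ) : ℕ :=
  Nat.card {p : List ℕ × (ℕ × ℕ → ℕ) //
    p.1.length ≤ s ∧ p.1.Pairwise (· ≥ ·) ∧ (∀ x ∈ p.1, 0 < x) ∧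
    p.1.sum = n ∧ IsSYT p.1 p.2}

/-- `Epar m = 1` if `m` is even, `0` otherwise. -/
def Epar (m : ℕ) : ℕ := if Even m then 1 else 0

open List DyckStep

instance : Fintype DyckStep := ⟨{U, D}, fun s => by cases s <;> simp⟩

section ListCount

variable {α : Type*} [DecidableEq α] {w : List α} {a d : α} {i j : ℕ}

lemma count_take_le_count_take (h : i ≤ j) : (w.take i).count a ≤ (w.take j).count a :=
  (List.take_sublist_take_left h).count_le a

lemma lt_of_count_take_lt (h : (w.take i).count a < (w.take j).count a) : i < j :=
  lt_of_not_ge fun hji => (count_take_le_count_take hji).not_gt h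

lemma count_take_succ_getD (hi : i < w.length) :
    (w.take (i + 1)).count (w.getD i d) = (w.take i).count (w.getD i d) + 1 := by
  rw [← List.take_concat_get' w i hi, count_append, List.getD_eq_getElem w d hi,
    count_singleton_self]

lemma count_take_lt_count (hi : i < w.length) :
    (w.take i).count (w.getD i d) < w.count (w.getD i d) := by
  have := count_take_le_count_take (w := w) (a := w.getD i d) (Nat.succ_le_of_lt hi)
  rw [count_take_succ_getD hi, List.take_length] at this
  omega

lemma count_take_eq_card_filter (hi : i ≤ w.length) :
    (w.take i).count a = #{j ∈ Finset.range i | w.getD j d = a} := by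
  induction i with
  | zero => simp
  | succ i ih =>
    rw [← List.take_concat_get' w i hi, count_append, ih (by omega), Finset.range_add_one,
      Finset.filter_insert, List.getD_eq_getElem w d hi]
    split_ifs with h
    · rw [Finset.card_insert_of_notMem (by simp), h, count_singleton_self]
    · simp [h]

end ListCount

def IsBallot (w : List DyckStep) : Prop :=
  ∀ i, (w.take i).count D ≤ (w.take i).count U

lemma IsBallot.count_le {w : List DyckStep} (hw : IsBallot w) : w.count D ≤ w.count U := by
  simpa using hw w.length

lemma IsBallot.take {w : List DyckStep} (hw : IsBallot w) (k : ℕ) : IsBallot (w.take k) :=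
  fun i => by rw [List.take_take]; exact hw _

def BallotAppendable (w : List DyckStep) (s : DyckStep) : Prop :=
  s = U ∨ w.count D < w.count U

lemma isBallot_append_singleton_iff {w : List DyckStep} {s : DyckStep} :
    IsBallot (w ++ [s]) ↔ IsBallot w ∧ BallotAppendable w s := by
  constructor
  · intro h
    refine ⟨by simpa using h.take w.length, ?_⟩
    have := h.count_le
    cases s <;> simp [BallotAppendable, count_append] at this ⊢
    omega
  · rintro ⟨hw, hs⟩ i
    by_cases hi : i ≤ w.length
    · rw [List.take_append_of_le_length hi]
      exact hw i
    · rw [List.take_of_length_le (by simp; omega)]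
      have := hw.count_le
      cases s <;> simp [BallotAppendable, count_append] at hs ⊢ <;> omega

lemma count_U_add_count_D (w : List DyckStep) : w.count U + w.count D = w.length := by
  induction w with
  | nil => simp
  | cons x t ih => cases x <;> simp <;> omega

def BallotWord (n : ℕ) : Type := {w : List DyckStep // w.length = n ∧ IsBallot w}

instance (n : ℕ) : Finite (BallotWord n) :=
  ((List.finite_length_eq DyckStep n).subset fun _ hw => hw.1).to_subtype

def BalancedBallotWord (n : ℕ) : Type := {w : BallotWord n // w.1.count U = w.1.count D}

def ballotWordSuccEquiv (m : ℕ) : BallotWord (m + 1) ≃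
    {p : BallotWord m × DyckStep // BallotAppendable p.1.1 p.2} where
  toFun w :=
    have hne : w.1 ≠ [] := List.ne_nil_of_length_eq_add_one w.2.1
    have hw : IsBallot (w.1.dropLast ++ [w.1.getLast hne]) :=
      (List.dropLast_append_getLast hne).symm ▸ w.2.2
    ⟨(⟨w.1.dropLast, by simp [w.2.1], (isBallot_append_singleton_iff.1 hw).1⟩,
      w.1.getLast hne), (isBallot_append_singleton_iff.1 hw).2⟩
  invFun p := ⟨p.1.1.1 ++ [p.1.2], by simp [p.1.1.2.1],
    isBallot_append_singleton_iff.2 ⟨p.1.1.2.2, p.2⟩⟩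
  left_inv w := Subtype.ext (List.dropLast_append_getLast _)
  right_inv p := Subtype.ext (Prod.ext (Subtype.ext List.dropLast_concat) List.getLast_concat)

def balancedBallotWordEquivNotAppendable (m : ℕ) : BalancedBallotWord m ≃
    {p : BallotWord m × DyckStep // ¬BallotAppendable p.1.1 p.2} where
  toFun w := ⟨(w.1, D), by simp [BallotAppendable, w.2]⟩
  invFun p := ⟨p.1.1, le_antisymm (not_lt.1 (not_or.1 p.2).2) p.1.1.2.2.count_le⟩
  left_inv w := rfl
  right_inv p := Subtype.ext (Prod.ext rfl (p.1.2.dichotomy.resolve_left (not_or.1 p.2).1).symm)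

lemma card_ballotWord_succ_add_card_balancedBallotWord (m : ℕ) :
    Nat.card (BallotWord (m + 1)) + Nat.card (BalancedBallotWord m) =
      2 * Nat.card (BallotWord m) := by
  classical
  rw [Nat.card_congr (ballotWordSuccEquiv m),
    Nat.card_congr (balancedBallotWordEquivNotAppendable m), ← Nat.card_sum,
    Nat.card_congr (Equiv.sumCompl _), Nat.card_prod, Nat.card_eq_fintype_card (α := DyckStep),
    mul_comm]
  rfl

def balancedBallotWordEquivDyckWord (k : ℕ) :
    BalancedBallotWord (2 * k) ≃ {p : DyckWord // p.semilength = k} where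
  toFun w := ⟨⟨w.1.1, w.2, w.1.2.2⟩, by
    have := count_U_add_count_D w.1.1
    have := w.1.2.1
    have := w.2
    simp only [DyckWord.semilength]
    omega⟩
  invFun p := ⟨⟨p.1.toList, by rw [← p.1.two_mul_semilength_eq_length, p.2],
    p.1.count_D_le_count_U⟩, p.1.count_U_eq_count_D⟩
  left_inv w := rfl
  right_inv p := rfl

lemma card_balancedBallotWord (m : ℕ) :
    Nat.card (BalancedBallotWord m) = Epar m * catalan (m / 2) := by
  rcases Nat.even_or_odd' m with ⟨k, rfl | rfl⟩
  · rw [Nat.card_congr (balancedBallotWordEquivDyckWord k), Nat.card_eq_fintype_card,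
      DyckWord.card_dyckWord_semilength_eq_catalan, Epar, if_pos (even_two_mul k),
      Nat.mul_div_cancel_left k two_pos, one_mul]
  · have : IsEmpty (BalancedBallotWord (2 * k + 1)) := ⟨fun w => by
      have := count_U_add_count_D w.1.1
      have := w.1.2.1
      have := w.2
      omega⟩
    rw [Nat.card_of_isEmpty, Epar, if_neg (Nat.not_even_two_mul_add_one k), zero_mul]

lemma mem_cells_iff {lam : List ℕ} {c r : ℕ} : (c, r) ∈ Cells lam ↔ r < lam.getD c 0 := by
  refine ⟨And.right, fun h => ⟨?_, h⟩⟩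
  by_contra hc
  rw [List.getD_eq_default _ _ (not_lt.1 hc)] at h
  omega

section StandardTableau

variable {lam : List ℕ} {T : ℕ × ℕ → ℕ}

lemma IsSYT.one_le_of_mem (hT : IsSYT lam T) {p : ℕ × ℕ} (hp : p ∈ Cells lam) : 1 ≤ T p :=
  (hT.1.mapsTo hp).1

lemma IsSYT.le_sum_of_mem (hT : IsSYT lam T) {p : ℕ × ℕ} (hp : p ∈ Cells lam) :
    T p ≤ lam.sum :=
  (hT.1.mapsTo hp).2

lemma IsSYT.mem_cells_of_ne_zero (hT : IsSYT lam T) {p : ℕ × ℕ} (hp : T p ≠ 0) :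
    p ∈ Cells lam :=
  by_contra fun h => hp (hT.2.2.2 p h)

lemma IsSYT.eq_of_apply_eq (hT : IsSYT lam T) {p q : ℕ × ℕ} (hp : T p ≠ 0) (h : T p = T q) :
    p = q :=
  hT.1.injOn (hT.mem_cells_of_ne_zero hp) (hT.mem_cells_of_ne_zero (h ▸ hp)) h

lemma IsSYT.card_filter_lt (hT : IsSYT lam T) {c r : ℕ} (hp : (c, r) ∈ Cells lam) :
    #{r' ∈ Finset.range (lam.getD c 0) | T (c, r') < T (c, r)} = r := by
  suffices h : {r' ∈ Finset.range (lam.getD c 0) | T (c, r') < T (c, r)} = Finset.range r by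
    rw [h, Finset.card_range]
  have hr : r < lam.getD c 0 := hp.2
  ext r'
  simp only [Finset.mem_filter, Finset.mem_range]
  constructor
  · rintro ⟨hr', hlt⟩
    by_contra! hle
    rcases hle.lt_or_eq with hlt' | rfl
    · exact (hT.2.1 _ hp _ (mem_cells_iff.2 hr') rfl hlt').asymm hlt
    · exact lt_irrefl _ hlt
  · intro hr'
    exact ⟨hr'.trans hr, hT.2.1 _ (mem_cells_iff.2 (hr'.trans hr)) _ hp rfl hr'⟩

end StandardTableau

def twoColumnShape (a b : ℕ) : List ℕ := [a, b].filter (0 < ·)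

lemma length_twoColumnShape_le (a b : ℕ) : (twoColumnShape a b).length ≤ 2 :=
  List.length_filter_le _ _

lemma pos_of_mem_twoColumnShape {a b x : ℕ} (hx : x ∈ twoColumnShape a b) : 0 < x := by
  simpa using (List.mem_filter.1 hx).2

lemma pairwise_twoColumnShape {a b : ℕ} (hba : b ≤ a) :
    (twoColumnShape a b).Pairwise (· ≥ ·) :=
  (List.pairwise_pair (R := (· ≥ ·)).2 hba).filter _

lemma sum_twoColumnShape (a b : ℕ) : (twoColumnShape a b).sum = a + b := by
  rcases a.eq_zero_or_pos with rfl | ha <;> rcases b.eq_zero_or_pos with rfl | hb <;>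
    simp [twoColumnShape, *]

lemma getD_twoColumnShape {a b : ℕ} (hba : b ≤ a) (c : ℕ) :
    (twoColumnShape a b).getD c 0 = [a, b].getD c 0 := by
  rcases a.eq_zero_or_pos with rfl | ha <;> rcases b.eq_zero_or_pos with rfl | hb <;>
    rcases c with _ | _ | c <;> simp_all [twoColumnShape]

lemma eq_twoColumnShape {lam : List ℕ} (hlen : lam.length ≤ 2) (hpos : ∀ x ∈ lam, 0 < x) :
    lam = twoColumnShape (lam.getD 0 0) (lam.getD 1 0) := by
  rcases lam with _ | ⟨x, _ | ⟨y, _ | _⟩⟩ <;> simp_all [twoColumnShape]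

lemma getD_one_le_getD_zero {lam : List ℕ} (hsort : lam.Pairwise (· ≥ ·)) :
    lam.getD 1 0 ≤ lam.getD 0 0 := by
  rcases lam with _ | ⟨x, _ | ⟨y, t⟩⟩ <;> simp_all

def colOf : DyckStep → ℕ
  | U => 0
  | D => 1

lemma colOf_injective : Function.Injective colOf := by
  rintro (_ | _) (_ | _) h <;> simp_all [colOf]

lemma colOf_eq_zero_iff {s : DyckStep} : colOf s = 0 ↔ s = U := by
  cases s <;> simp [colOf]

def shapeOf (w : List DyckStep) : List ℕ := twoColumnShape (w.count U) (w.count D)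

lemma sum_shapeOf (w : List DyckStep) : (shapeOf w).sum = w.length := by
  rw [shapeOf, sum_twoColumnShape, count_U_add_count_D]

lemma mem_cells_shapeOf {w : List DyckStep} (hw : IsBallot w) {p : ℕ × ℕ} :
    p ∈ Cells (shapeOf w) ↔ ∃ s, p.1 = colOf s ∧ p.2 < w.count s := by
  obtain ⟨c, r⟩ := p
  rw [mem_cells_iff, shapeOf, getD_twoColumnShape hw.count_le]
  constructor
  · intro h
    rcases c with _ | _ | c
    exacts [⟨U, rfl, h⟩, ⟨D, rfl, h⟩, by simp at h]
  · rintro ⟨s, rfl, h⟩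
    cases s <;> simpa [colOf] using h

section WordToTableau

variable {w : List DyckStep} {s : DyckStep} {i j : ℕ}

/-- The cell receiving the entry `i + 1`. -/
def cellOf (w : List DyckStep) (i : ℕ) : ℕ × ℕ :=
  (colOf (w.getD i U), (w.take i).count (w.getD i U))

lemma cellOf_injOn : Set.InjOn (cellOf w) (Set.Iio w.length) := by
  intro i hi j hj h
  by_contra hne
  wlog hij : i < j generalizing i j
  · exact this hj hi h.symm (Ne.symm hne) (by omega)
  have hs : w.getD i U = w.getD j U := colOf_injective (congrArg Prod.fst h)
  have hrow : (w.take i).count (w.getD i U) = (w.take j).count (w.getD j U) :=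
    congrArg Prod.snd h
  have hsucc := count_take_succ_getD (d := U) hi
  rw [hs] at hrow hsucc
  have := count_take_le_count_take (w := w) (a := w.getD j U) (show i + 1 ≤ j by omega)
  omega

lemma cellOf_mem_cells (hw : IsBallot w) (hi : i < w.length) :
    cellOf w i ∈ Cells (shapeOf w) :=
  (mem_cells_shapeOf hw).2 ⟨_, rfl, count_take_lt_count hi⟩

lemma exists_cellOf_eq_of_lt_count {r : ℕ} (hr : r < w.count s) :
    ∃ i < w.length, cellOf w i = (colOf s, r) := by
  induction w generalizing r with
  | nil => simp at hr
  | cons x t ih =>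
    by_cases hx : x = s ∧ r = 0
    · exact ⟨0, by simp, by simp [cellOf, hx.1, hx.2]⟩
    obtain ⟨r', hr', rfl⟩ : ∃ r' < t.count s, r = r' + if x = s then 1 else 0 := by
      by_cases hxs : x = s
      · have hr0 : r ≠ 0 := fun h0 => hx ⟨hxs, h0⟩
        subst hxs
        simp only [count_cons_self] at hr
        exact ⟨r - 1, by omega, by simp; omega⟩
      · exact ⟨r, by simpa [count_cons, hxs] using hr, by simp [hxs]⟩
    obtain ⟨i, hi, h⟩ := ih hr'
    refine ⟨i + 1, by simpa using hi, ?_⟩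
    simp only [cellOf, Prod.mk.injEq] at h ⊢
    have hs := colOf_injective h.1
    rw [hs] at h
    rw [List.getD_cons_succ, List.take_succ_cons, hs, count_cons, ← h.2]
    simp

lemma exists_cellOf_eq_of_mem_cells (hw : IsBallot w) {p : ℕ × ℕ}
    (hp : p ∈ Cells (shapeOf w)) : ∃ i < w.length, cellOf w i = p := by
  obtain ⟨s, hc, hr⟩ := (mem_cells_shapeOf hw).1 hp
  obtain ⟨i, hi, h⟩ := exists_cellOf_eq_of_lt_count hr
  exact ⟨i, hi, h.trans (Prod.ext hc.symm rfl)⟩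

lemma lt_of_cellOf_fst_eq_of_snd_lt (h₁ : (cellOf w i).1 = (cellOf w j).1)
    (h₂ : (cellOf w i).2 < (cellOf w j).2) : i < j := by
  simp only [cellOf, colOf_injective.eq_iff] at h₁ h₂
  rw [h₁] at h₂
  exact lt_of_count_take_lt h₂

/-- Row strictness is where the ballot condition enters: the `D` in row `r` is preceded by at
least `r + 1` letters `U`. -/
lemma lt_of_cellOf_snd_eq_of_fst_lt (hw : IsBallot w) (hj : j < w.length)
    (h₁ : (cellOf w i).2 = (cellOf w j).2) (h₂ : (cellOf w i).1 < (cellOf w j).1) : i < j := by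
  obtain ⟨hiU, hjD⟩ : w.getD i U = U ∧ w.getD j U = D := by
    simp only [cellOf] at h₂
    rcases (w.getD i U).dichotomy with h | h <;> rcases (w.getD j U).dichotomy with h' | h' <;>
      simp_all [colOf]
  simp only [cellOf, hiU, hjD] at h₁
  have hsucc := count_take_succ_getD (d := U) hj
  rw [hjD] at hsucc
  have hne : i ≠ j := by
    rintro rfl
    rw [hiU] at hjD
    cases hjD
  have : i < j + 1 := lt_of_count_take_lt (w := w) (a := U) (by have := hw (j + 1); omega)
  omega

/-- The inverse of `cellOf`, shifted to take the values `1, …, w.length`. -/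
noncomputable def tableauOf (w : List DyckStep) (p : ℕ × ℕ) : ℕ :=
  if h : ∃ i < w.length, cellOf w i = p then h.choose + 1 else 0

lemma tableauOf_eq_succ_iff {p : ℕ × ℕ} :
    tableauOf w p = i + 1 ↔ i < w.length ∧ cellOf w i = p := by
  unfold tableauOf
  split_ifs with h
  · rw [Nat.add_right_cancel_iff]
    exact ⟨fun hi => hi ▸ h.choose_spec,
      fun hi => cellOf_injOn h.choose_spec.1 hi.1 (h.choose_spec.2.trans hi.2.symm)⟩
  · exact iff_of_false id fun hi => h ⟨i, hi⟩

lemma tableauOf_cellOf (hi : i < w.length) : tableauOf w (cellOf w i) = i + 1 :=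
  tableauOf_eq_succ_iff.2 ⟨hi, rfl⟩

lemma isSYT_tableauOf (hw : IsBallot w) : IsSYT (shapeOf w) (tableauOf w) := by
  refine ⟨⟨?_, ?_, ?_⟩, ?_, ?_, ?_⟩
  · intro p hp
    obtain ⟨i, hi, rfl⟩ := exists_cellOf_eq_of_mem_cells hw hp
    rw [Set.mem_Icc, tableauOf_cellOf hi, sum_shapeOf]
    omega
  · intro p hp q hq hpq
    obtain ⟨i, hi, rfl⟩ := exists_cellOf_eq_of_mem_cells hw hp
    obtain ⟨j, hj, rfl⟩ := exists_cellOf_eq_of_mem_cells hw hq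
    rw [tableauOf_cellOf hi, tableauOf_cellOf hj] at hpq
    rw [Nat.succ_injective hpq]
  · intro k hk
    rw [sum_shapeOf, Set.mem_Icc] at hk
    exact ⟨cellOf w (k - 1), cellOf_mem_cells hw (by omega),
      by rw [tableauOf_cellOf (by omega)]; omega⟩
  · intro p hp q hq h₁ h₂
    obtain ⟨i, hi, rfl⟩ := exists_cellOf_eq_of_mem_cells hw hp
    obtain ⟨j, hj, rfl⟩ := exists_cellOf_eq_of_mem_cells hw hq
    rw [tableauOf_cellOf hi, tableauOf_cellOf hj]
    exact Nat.succ_lt_succ (lt_of_cellOf_fst_eq_of_snd_lt h₁ h₂)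
  · intro p hp q hq h₁ h₂
    obtain ⟨i, hi, rfl⟩ := exists_cellOf_eq_of_mem_cells hw hp
    obtain ⟨j, hj, rfl⟩ := exists_cellOf_eq_of_mem_cells hw hq
    rw [tableauOf_cellOf hi, tableauOf_cellOf hj]
    exact Nat.succ_lt_succ (lt_of_cellOf_snd_eq_of_fst_lt hw hj h₁ h₂)
  · intro p hp
    exact dif_neg fun ⟨i, hi, hip⟩ => hp (hip ▸ cellOf_mem_cells hw hi)

end WordToTableau

section TableauToWord

variable {lam : List ℕ} {T : ℕ × ℕ → ℕ}

open scoped Classical in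
noncomputable def wordOf (T : ℕ × ℕ → ℕ) (n : ℕ) : List DyckStep :=
  (List.range n).map fun j => if ∃ r, T (0, r) = j + 1 then U else D

lemma length_wordOf {n : ℕ} : (wordOf T n).length = n := by
  simp [wordOf]

open scoped Classical in
lemma getElem_wordOf {n j : ℕ} (hj : j < (wordOf T n).length) :
    (wordOf T n)[j] = if ∃ r, T (0, r) = j + 1 then U else D := by
  simp [wordOf]

lemma getD_wordOf_of_apply_eq (hT : IsSYT lam T) {s : DyckStep} {r j : ℕ}
    (h : T (colOf s, r) = j + 1) : (wordOf T lam.sum).getD j U = s := by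
  have hj : j < (wordOf T lam.sum).length := by
    have := hT.le_sum_of_mem (hT.mem_cells_of_ne_zero (p := (colOf s, r)) (by omega))
    rw [length_wordOf]
    omega
  rw [List.getD_eq_getElem _ _ hj, getElem_wordOf]
  cases s
  · exact if_pos ⟨r, h⟩
  · refine if_neg fun ⟨r', hr'⟩ => ?_
    have := hT.eq_of_apply_eq (by omega) (hr'.trans h.symm)
    simp [colOf] at this

lemma exists_apply_colOf_getD_wordOf (hT : IsSYT lam T) (hlen : lam.length ≤ 2) {j : ℕ}
    (hj : j < lam.sum) : ∃ r, T (colOf ((wordOf T lam.sum).getD j U), r) = j + 1 := by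
  obtain ⟨⟨c, r⟩, hp, hTp⟩ :=
    hT.1.surjOn (show j + 1 ∈ Set.Icc 1 lam.sum from ⟨by omega, by omega⟩)
  have hc : c < 2 := hp.1.trans_le hlen
  obtain ⟨s, rfl⟩ : ∃ s, colOf s = c := by
    rcases c with _ | _ | c
    exacts [⟨U, rfl⟩, ⟨D, rfl⟩, by omega]
  exact ⟨r, by rw [getD_wordOf_of_apply_eq hT hTp]; exact hTp⟩

lemma count_take_wordOf (hT : IsSYT lam T) (hlen : lam.length ≤ 2) {s : DyckStep} {i : ℕ}
    (hi : i ≤ lam.sum) : ((wordOf T lam.sum).take i).count s =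
      #{r ∈ Finset.range (lam.getD (colOf s) 0) | T (colOf s, r) ≤ i} := by
  rw [count_take_eq_card_filter (d := U) (by rwa [length_wordOf])]
  symm
  refine Finset.card_bij (fun r _ => T (colOf s, r) - 1) (fun r hr => ?_)
    (fun r₁ hr₁ r₂ hr₂ h => ?_) (fun j hj => ?_)
  · simp only [Finset.mem_filter, Finset.mem_range] at hr ⊢
    have := hT.one_le_of_mem (mem_cells_iff.2 hr.1)
    exact ⟨by omega, getD_wordOf_of_apply_eq hT (r := r) (by omega)⟩
  · simp only [Finset.mem_filter, Finset.mem_range] at hr₁ hr₂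
    have h₁ := hT.one_le_of_mem (mem_cells_iff.2 hr₁.1)
    have h₂ := hT.one_le_of_mem (mem_cells_iff.2 hr₂.1)
    simpa using hT.eq_of_apply_eq (by omega) (by omega : T (colOf s, r₁) = T (colOf s, r₂))
  · simp only [Finset.mem_filter, Finset.mem_range] at hj
    obtain ⟨r, hr⟩ := exists_apply_colOf_getD_wordOf hT hlen (hj.1.trans_le hi)
    rw [hj.2] at hr
    have hp := hT.mem_cells_of_ne_zero (p := (colOf s, r)) (by omega)
    exact ⟨r, by simp only [Finset.mem_filter, Finset.mem_range]; exact ⟨hp.2, by omega⟩,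
      by simp [hr]⟩

lemma isBallot_wordOf (hT : IsSYT lam T) (hlen : lam.length ≤ 2)
    (hsort : lam.Pairwise (· ≥ ·)) : IsBallot (wordOf T lam.sum) := by
  intro i
  wlog hi : i ≤ lam.sum generalizing i
  · rw [List.take_of_length_le (by rw [length_wordOf]; omega)]
    simpa only [List.take_of_length_le (le_of_eq length_wordOf)] using this lam.sum le_rfl
  rw [count_take_wordOf hT hlen hi, count_take_wordOf hT hlen hi]
  refine Finset.card_le_card fun r hr => ?_
  rw [Finset.mem_filter, Finset.mem_range] at hr ⊢
  have h₀ : r < lam.getD 0 0 := hr.1.trans_le (getD_one_le_getD_zero hsort)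
  exact ⟨h₀, (hT.2.2.1 (0, r) (mem_cells_iff.2 h₀) (1, r) (mem_cells_iff.2 hr.1) rfl
    zero_lt_one).le.trans hr.2⟩

lemma count_wordOf (hT : IsSYT lam T) (hlen : lam.length ≤ 2) (s : DyckStep) :
    (wordOf T lam.sum).count s = lam.getD (colOf s) 0 := by
  have h : (wordOf T lam.sum).take lam.sum = wordOf T lam.sum :=
    List.take_of_length_le (le_of_eq length_wordOf)
  rw [← h, count_take_wordOf hT hlen le_rfl, Finset.filter_true_of_mem, Finset.card_range]
  exact fun r hr => hT.le_sum_of_mem (mem_cells_iff.2 (Finset.mem_range.1 hr))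

lemma shapeOf_wordOf (hT : IsSYT lam T) (hlen : lam.length ≤ 2) (hpos : ∀ x ∈ lam, 0 < x) :
    shapeOf (wordOf T lam.sum) = lam := by
  rw [shapeOf, count_wordOf hT hlen, count_wordOf hT hlen]
  exact (eq_twoColumnShape hlen hpos).symm

lemma cellOf_wordOf (hT : IsSYT lam T) (hlen : lam.length ≤ 2) {p : ℕ × ℕ} {i : ℕ}
    (hp : p ∈ Cells lam) (hTp : T p = i + 1) : cellOf (wordOf T lam.sum) i = p := by
  obtain ⟨c, r⟩ := p
  have hi : i < lam.sum := by have := hT.le_sum_of_mem hp; omega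
  obtain ⟨r', hr'⟩ := exists_apply_colOf_getD_wordOf hT hlen hi
  have hc := hT.eq_of_apply_eq (by omega) (hr'.trans hTp.symm)
  simp only [Prod.mk.injEq] at hc
  have hrow : ((wordOf T lam.sum).take i).count ((wordOf T lam.sum).getD i U) = r := by
    rw [count_take_wordOf hT hlen hi.le, hc.1, ← hT.card_filter_lt hp, hTp]
    simp only [Nat.lt_succ_iff]
  rw [cellOf, hc.1, hrow]

lemma tableauOf_wordOf (hT : IsSYT lam T) (hlen : lam.length ≤ 2)
    (hsort : lam.Pairwise (· ≥ ·)) (hpos : ∀ x ∈ lam, 0 < x) :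
    tableauOf (wordOf T lam.sum) = T := by
  funext p
  by_cases hp : p ∈ Cells lam
  · obtain ⟨i, hi⟩ := Nat.exists_eq_add_of_le' (hT.one_le_of_mem hp)
    have := hT.le_sum_of_mem hp
    rw [hi, ← cellOf_wordOf hT hlen hp hi, tableauOf_cellOf (by rw [length_wordOf]; omega)]
  · rw [hT.2.2.2 p hp]
    exact (isSYT_tableauOf (isBallot_wordOf hT hlen hsort)).2.2.2 p
      (by rwa [shapeOf_wordOf hT hlen hpos])

lemma wordOf_tableauOf (w : List DyckStep) : wordOf (tableauOf w) w.length = w := by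
  refine List.ext_getElem length_wordOf fun j _ hj => ?_
  have hU : (∃ r, tableauOf w (0, r) = j + 1) ↔ w[j] = U := by
    simp only [tableauOf_eq_succ_iff, cellOf, Prod.mk.injEq, colOf_eq_zero_iff, exists_and_left,
      exists_eq', and_true, hj, true_and]
    rw [List.getD_eq_getElem _ _ hj]
  rw [getElem_wordOf]
  split_ifs with h
  · exact (hU.1 h).symm
  · exact ((w[j]).dichotomy.resolve_left (mt hU.2 h)).symm

end TableauToWord

abbrev TwoColumnSYT (n : ℕ) : Type :=
  {p : List ℕ × (ℕ × ℕ → ℕ) // p.1.length ≤ 2 ∧ p.1.Pairwise (· ≥ ·) ∧ (∀ x ∈ p.1, 0 < x) ∧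
    p.1.sum = n ∧ IsSYT p.1 p.2}

noncomputable def ballotWordEquivTwoColumnSYT (n : ℕ) : BallotWord n ≃ TwoColumnSYT n where
  toFun w := ⟨(shapeOf w.1, tableauOf w.1), length_twoColumnShape_le _ _,
    pairwise_twoColumnShape w.2.2.count_le, fun _ => pos_of_mem_twoColumnShape,
    by rw [sum_shapeOf, w.2.1], isSYT_tableauOf w.2.2⟩
  invFun T := ⟨wordOf T.1.2 n, length_wordOf, by
    obtain ⟨⟨lam, T⟩, hlen, hsort, -, rfl, hT⟩ := T
    exact isBallot_wordOf hT hlen hsort⟩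
  left_inv w := by
    obtain ⟨w, rfl, -⟩ := w
    exact Subtype.ext (wordOf_tableauOf w)
  right_inv T := by
    obtain ⟨⟨lam, T⟩, hlen, hsort, hpos, rfl, hT⟩ := T
    exact Subtype.ext
      (Prod.ext (shapeOf_wordOf hT hlen hpos) (tableauOf_wordOf hT hlen hsort hpos))

lemma tau_two_eq_card_ballotWord (n : ℕ) : tau 2 n = Nat.card (BallotWord n) :=
  (Nat.card_congr (ballotWordEquivTwoColumnSYT n)).symm

theorem stmt3 (n : ℕ) (hn : 1 ≤ n) :
    tau 2 n + Epar (n - 1) * catalan ((n - 1) / 2) = 2 * tau 2 (n - 1) := by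
  obtain ⟨m, rfl⟩ := Nat.exists_eq_add_of_le' hn
  rw [Nat.add_sub_cancel, tau_two_eq_card_ballotWord, tau_two_eq_card_ballotWord,
    ← card_balancedBallotWord]
  exact card_ballotWord_succ_add_card_balancedBallotWord m
end

section
/- The number of standard Young tableaux with exactly n cells and at most two columns equals the central binomial coefficient binomial(n, ⌊n/2⌋). -/
open Finset Filter Topology

/-!
A standard tableau with at most two columns is determined by the set `S ⊆ {0, …, n-1}` of the
entries (minus one) of its second column: each column lists its entries in increasing order, the
first one holding the complement of `S`, and the row condition says exactly that `S` is a ballot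
set, i.e. every initial segment `{0, …, m-1}` contains at most `m / 2` elements of `S`.
Sorting ballot sets by whether they contain the largest candidate gives a Pascal-type recursion,
whence there are `C(n, k+1) - C(n, k)` ballot sets of size `k + 1`; summing over `k ≤ n / 2`
telescopes to `C(n, n / 2)`.
-/

namespace TwoColumnSYT

def countBelow (S : Finset ℕ) (m : ℕ) : ℕ := Nat.count (· ∈ S) m

/-- The `r`-th smallest element of `S`, counting from `0`; junk value `0` when `#S ≤ r`. -/
noncomputable def nth (S : Finset ℕ) (r : ℕ) : ℕ := Nat.nth (· ∈ S) r

section Enumeration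

variable {S T : Finset ℕ} {m n r x : ℕ}

lemma card_toFinset_mem (hf : (Set.ofPred (· ∈ S)).Finite) : #hf.toFinset = #S := by
  congr 1; ext; simp

lemma setOf_lt_card_toFinset (S : Finset ℕ) :
    {r | ∀ hf : (Set.ofPred (· ∈ S)).Finite, r < #hf.toFinset} = Set.Iio #S := by
  ext r
  simp only [Set.mem_ofPred_eq, Set.mem_Iio, card_toFinset_mem]
  exact ⟨fun h => h S.finite_toSet, fun h _ => h⟩

lemma countBelow_succ (S : Finset ℕ) (m : ℕ) :
    countBelow S (m + 1) = countBelow S m + if m ∈ S then 1 else 0 :=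
  Nat.count_succ _ m

lemma countBelow_mono (S : Finset ℕ) : Monotone (countBelow S) := Nat.count_monotone _

lemma countBelow_le_countBelow (h : S ⊆ T) (m : ℕ) : countBelow S m ≤ countBelow T m :=
  Nat.count_mono_left fun _ _ hx => h hx

lemma countBelow_le_card (S : Finset ℕ) (m : ℕ) : countBelow S m ≤ #S := by
  simpa [countBelow, card_toFinset_mem] using Nat.count_le_card S.finite_toSet m

lemma countBelow_eq_card (hS : S ⊆ range n) (hm : n ≤ m) : countBelow S m = #S := by
  rw [countBelow, Nat.count_eq_card_filter_range, filter_mem_eq_inter, inter_eq_right.2]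
  exact hS.trans (range_subset_range.2 hm)

lemma countBelow_sdiff_add_countBelow (hm : m ≤ n) :
    countBelow (range n \ S) m + countBelow S m = m := by
  induction m with
  | zero => rfl
  | succ m ih =>
    have hmn : m < n := hm
    rw [countBelow_succ, countBelow_succ]
    by_cases hmS : m ∈ S <;> simp [hmS, hmn] <;> omega

lemma countBelow_insert (hS : S ⊆ range n) (m : ℕ) :
    countBelow (insert n S) m = countBelow S m + if n < m then 1 else 0 := by
  induction m with
  | zero => rfl
  | succ m ih =>
    have hmS : m ∈ S → m < n := fun h => mem_range.1 (hS h)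
    rw [countBelow_succ, countBelow_succ, ih]
    by_cases hmn : m = n
    · subst hmn; simp_all
    · by_cases hm : m ∈ S <;> simp [hm, hmn] <;> split_ifs <;> omega

lemma nth_mem (hr : r < #S) : nth S r ∈ S :=
  Nat.nth_mem_of_lt_card S.finite_toSet (by rwa [card_toFinset_mem])

lemma nth_strictMonoOn (S : Finset ℕ) : StrictMonoOn (nth S) (Set.Iio #S) := by
  unfold nth
  simpa [card_toFinset_mem] using Nat.nth_strictMonoOn (p := (· ∈ S)) S.finite_toSet

lemma countBelow_nth (hr : r < #S) : countBelow S (nth S r) = r :=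
  Nat.count_nth_of_lt_card_finite S.finite_toSet (by rwa [card_toFinset_mem])

lemma nth_countBelow (hx : x ∈ S) : nth S (countBelow S x) = x := Nat.nth_count hx

lemma countBelow_lt_card (hx : x ∈ S) : countBelow S x < #S := by
  simpa [countBelow, card_toFinset_mem] using Nat.count_lt_card S.finite_toSet hx

lemma nth_lt_iff_lt_countBelow (hr : r < #S) : nth S r < m ↔ r < countBelow S m := by
  refine ⟨fun h => ?_, Nat.nth_lt_of_lt_count⟩
  calc r < countBelow S (nth S r + 1) := by
        rw [countBelow_succ, countBelow_nth hr, if_pos (nth_mem hr)]; omega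
    _ ≤ countBelow S m := countBelow_mono S h

lemma image_nth_range_card (S : Finset ℕ) : (range #S).image (nth S) = S := by
  ext x
  simp only [mem_image, mem_range]
  exact ⟨fun ⟨r, hr, hx⟩ => hx ▸ nth_mem hr,
    fun hx => ⟨countBelow S x, countBelow_lt_card hx, nth_countBelow hx⟩⟩

lemma eq_nth_image_of_strictMonoOn {f : ℕ → ℕ} {k : ℕ} (hf : StrictMonoOn f (Set.Iio k))
    (hr : r < k) : f r = nth ((range k).image f) r := by
  have hcard : #((range k).image f) = k := by
    rw [card_image_of_injOn (by simpa using hf.injOn), card_range]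
  refine Nat.eq_nth_of_strictMonoOn_of_mapsTo_of_surjOn f ?_ ?_ ?_ ?_ <;>
    rw [setOf_lt_card_toFinset, hcard]
  · intro y hy; simpa using hy
  · intro i hi; simpa using ⟨i, hi, rfl⟩
  · exact hf
  · exact hr

end Enumeration

def IsBallot (S : Finset ℕ) : Prop := ∀ m, 2 * countBelow S m ≤ m

section Ballot

variable {S T : Finset ℕ} {n : ℕ}

lemma IsBallot.two_mul_card_le (h : IsBallot S) (hS : S ⊆ range n) : 2 * #S ≤ n := by
  simpa [countBelow_eq_card hS le_rfl] using h n

lemma IsBallot.mono (h : IsBallot T) (hST : S ⊆ T) : IsBallot S := fun m =>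
  (Nat.mul_le_mul_left 2 (countBelow_le_countBelow hST m)).trans (h m)

lemma isBallot_insert (hS : S ⊆ range n) :
    IsBallot (insert n S) ↔ IsBallot S ∧ 2 * #S + 1 ≤ n := by
  refine ⟨fun h => ⟨h.mono (subset_insert n S), ?_⟩, fun ⟨h, hcard⟩ m => ?_⟩
  · have := h (n + 1)
    rw [countBelow_insert hS, countBelow_eq_card hS (Nat.le_succ n), if_pos n.lt_succ_self] at this
    omega
  · rw [countBelow_insert hS]
    split_ifs with hnm
    · have := countBelow_le_card S m
      omega
    · simpa using h m

/-- For the tableau with columns `range n \ S` and `S`, this is the row condition. -/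
lemma isBallot_iff_nth_sdiff_lt (hS : S ⊆ range n) (hcard : 2 * #S ≤ n) :
    IsBallot S ↔ ∀ r < #S, nth (range n \ S) r < nth S r := by
  have hAcard : #(range n \ S) = n - #S := by rw [card_sdiff_of_subset hS, card_range]
  constructor
  · intro h r hr
    have hx : nth S r < n := mem_range.1 (hS (nth_mem hr))
    have hballot := h (nth S r + 1)
    have hcount := countBelow_sdiff_add_countBelow (S := S) hx.le
    rw [countBelow_succ, countBelow_nth hr, if_pos (nth_mem hr)] at hballot
    rw [countBelow_nth hr] at hcount
    rw [nth_lt_iff_lt_countBelow (by omega)]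
    omega
  · intro h m
    rcases le_or_gt m n with hm | hm
    · have hcount := countBelow_sdiff_add_countBelow (S := S) hm
      obtain hj | ⟨j, hj⟩ : countBelow S m = 0 ∨ ∃ j, countBelow S m = j + 1 := by
        rcases h0 : countBelow S m with _ | j <;> simp
      · omega
      have hjS : j < #S := by have := countBelow_le_card S m; omega
      have hA : j < countBelow (range n \ S) m := by
        rw [← nth_lt_iff_lt_countBelow (by omega)]
        exact (h j hjS).trans ((nth_lt_iff_lt_countBelow hjS).2 (by omega))
      omega
    · rw [countBelow_eq_card hS hm.le]
      omega

end Ballot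

open scoped Classical in
noncomputable def ballotSets (n k : ℕ) : Finset (Finset ℕ) :=
  (powersetCard k (range n)).filter IsBallot

open scoped Classical in
noncomputable def ballotSubsets (n : ℕ) : Finset (Finset ℕ) :=
  (range n).powerset.filter IsBallot

section Counting

variable {n k : ℕ}

lemma mem_ballotSets {S : Finset ℕ} :
    S ∈ ballotSets n k ↔ S ⊆ range n ∧ #S = k ∧ IsBallot S := by
  simp [ballotSets, mem_powersetCard, and_assoc]

lemma ballotSets_zero_right (n : ℕ) : ballotSets n 0 = {∅} := by
  ext S
  simp only [mem_ballotSets, card_eq_zero, mem_singleton]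
  constructor
  · exact fun h => h.2.1
  · rintro rfl
    exact ⟨empty_subset _, rfl, fun m => by simp [countBelow]⟩

lemma ballotSets_eq_empty (h : n < 2 * k) : ballotSets n k = ∅ := by
  ext S
  simp only [mem_ballotSets, notMem_empty, iff_false]
  rintro ⟨hS, rfl, hb⟩
  exact absurd (hb.two_mul_card_le hS) (by omega)

/-- Pascal-type recursion, according to whether the largest candidate `n` belongs to the set. -/
lemma card_ballotSets_succ_succ (n k : ℕ) :
    #(ballotSets (n + 1) (k + 1)) =
      #(ballotSets n (k + 1)) + if 2 * k + 1 ≤ n then #(ballotSets n k) else 0 := by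
  classical
  set C := (powersetCard k (range n)).filter fun S => IsBallot (insert n S)
  have hsplit : ballotSets (n + 1) (k + 1) = ballotSets n (k + 1) ∪ C.image (insert n) := by
    rw [ballotSets, range_add_one, powersetCard_succ_insert notMem_range_self, filter_union,
      filter_image, ballotSets]
  have hnotMem : ∀ S ∈ C, n ∉ S := fun S hS hn =>
    notMem_range_self ((mem_powersetCard.1 (mem_filter.1 hS).1).1 hn)
  have hdisj : Disjoint (ballotSets n (k + 1)) (C.image (insert n)) := by
    refine disjoint_left.2 fun S hS hS' => ?_
    obtain ⟨T, -, rfl⟩ := mem_image.1 hS'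
    exact notMem_range_self ((mem_ballotSets.1 hS).1 (mem_insert_self n T))
  have hinj : Set.InjOn (insert n) (C : Set (Finset ℕ)) := fun S hS T hT h => by
    rw [← erase_insert (hnotMem S hS), ← erase_insert (hnotMem T hT), h]
  have hfilter : C = (ballotSets n k).filter fun _ => 2 * k + 1 ≤ n := by
    rw [ballotSets, filter_filter]
    refine filter_congr fun S hS => ?_
    rw [mem_powersetCard] at hS
    rw [isBallot_insert hS.1, hS.2]
  rw [hsplit, card_union_of_disjoint hdisj, card_image_of_injOn hinj, hfilter, filter_const]
  split_ifs <;> rfl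

/-- The ballot numbers `#(ballotSets n (k + 1)) = C(n, k + 1) - C(n, k)`, written without
truncated subtraction. -/
lemma card_ballotSets_add_choose (h : 2 * k + 1 ≤ n) :
    #(ballotSets n (k + 1)) + n.choose k = n.choose (k + 1) := by
  induction n generalizing k with
  | zero => omega
  | succ n ih =>
    rw [card_ballotSets_succ_succ]
    rcases Nat.lt_or_ge n (2 * k + 1) with hn | hn
    · obtain rfl : n = 2 * k := by omega
      rw [ballotSets_eq_empty (by omega), if_neg (by omega), card_empty, zero_add, zero_add,
        Nat.choose_symm_half]
    · rw [if_pos hn, Nat.choose_succ_succ' n k]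
      rcases k with _ | k
      · have := ih hn
        simp only [ballotSets_zero_right, card_singleton, Nat.choose_zero_right] at this ⊢
        omega
      · have h1 := ih hn
        have h2 := ih (k := k) (by omega)
        rw [Nat.choose_succ_succ' n k]
        omega

lemma sum_card_ballotSets {K : ℕ} (h : 2 * K ≤ n) :
    ∑ k ∈ range (K + 1), #(ballotSets n k) = n.choose K := by
  induction K with
  | zero => simp [ballotSets_zero_right]
  | succ K ih =>
    rw [sum_range_succ, ih (by omega), add_comm, card_ballotSets_add_choose (by omega)]

lemma mem_ballotSubsets {S : Finset ℕ} : S ∈ ballotSubsets n ↔ S ⊆ range n ∧ IsBallot S := by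
  simp [ballotSubsets]

lemma card_ballotSubsets (n : ℕ) : #(ballotSubsets n) = n.choose (n / 2) := by
  have hcard : ∀ S ∈ ballotSubsets n, #S ∈ range (n / 2 + 1) := fun S hS => by
    have := (mem_ballotSubsets.1 hS).2.two_mul_card_le (mem_ballotSubsets.1 hS).1
    rw [mem_range]
    omega
  rw [card_eq_sum_card_fiberwise hcard, ← sum_card_ballotSets (Nat.mul_div_le n 2)]
  refine sum_congr rfl fun k _ => congrArg card (ext fun S => ?_)
  rw [mem_filter, mem_ballotSubsets, mem_ballotSets]
  tauto

end Counting

def twoColumnCells (a b : ℕ) : Set (ℕ × ℕ) := {p | p.1 = 0 ∧ p.2 < a ∨ p.1 = 1 ∧ p.2 < b}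

def twoColumnShape (a b : ℕ) : List ℕ := [a, b].filter (· ≠ 0)

section Shape

variable {a b : ℕ}

lemma cells_twoColumnShape (hba : b ≤ a) : Cells (twoColumnShape a b) = twoColumnCells a b := by
  ext ⟨c, r⟩
  rcases Nat.eq_zero_or_pos b with rfl | hb
  · rcases Nat.eq_zero_or_pos a with rfl | ha
    · simp [twoColumnShape, Cells, twoColumnCells]
    · rcases c with _ | _ | c <;> simp [twoColumnShape, Cells, twoColumnCells, ha.ne']
  · rcases c with _ | _ | c <;>
      simp [twoColumnShape, Cells, twoColumnCells, hb.ne', (hb.trans_le hba).ne']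

lemma sum_twoColumnShape (a b : ℕ) : (twoColumnShape a b).sum = a + b := by
  by_cases ha : a = 0 <;> by_cases hb : b = 0 <;> simp [twoColumnShape, ha, hb]

lemma getD_one_twoColumnShape (hba : b ≤ a) : (twoColumnShape a b).getD 1 0 = b := by
  by_cases ha : a = 0 <;> by_cases hb : b = 0 <;> simp [twoColumnShape, ha, hb]
  omega

lemma twoColumnShape_isPartition (hba : b ≤ a) :
    (twoColumnShape a b).length ≤ 2 ∧ (twoColumnShape a b).Pairwise (· ≥ ·) ∧
      ∀ x ∈ twoColumnShape a b, 0 < x := by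
  by_cases ha : a = 0 <;> by_cases hb : b = 0 <;> simp [twoColumnShape, ha, hb] <;> omega

lemma eq_twoColumnShape {lam : List ℕ} (hlen : lam.length ≤ 2) (hsort : lam.Pairwise (· ≥ ·))
    (hpos : ∀ x ∈ lam, 0 < x) :
    ∃ a b, b ≤ a ∧ lam = twoColumnShape a b := by
  match lam, hlen with
  | [], _ => exact ⟨0, 0, le_rfl, rfl⟩
  | [a], _ => exact ⟨a, 0, Nat.zero_le a, by simp [twoColumnShape, (hpos a (by simp)).ne']⟩
  | [a, b], _ =>
    refine ⟨a, b, by simpa using hsort, ?_⟩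
    simp [twoColumnShape, (hpos a (by simp)).ne', (hpos b (by simp)).ne']

end Shape

noncomputable def fill (A B : Finset ℕ) : ℕ × ℕ → ℕ
  | (0, r) => if r < #A then nth A r + 1 else 0
  | (1, r) => if r < #B then nth B r + 1 else 0
  | _ => 0

section Fill

variable {A B : Finset ℕ} {n r : ℕ}

lemma fill_zero (hr : r < #A) : fill A B (0, r) = nth A r + 1 := if_pos hr

lemma fill_one (hr : r < #B) : fill A B (1, r) = nth B r + 1 := if_pos hr

lemma bijOn_fill (hdisj : Disjoint A B) (hunion : A ∪ B = range n) :
    Set.BijOn (fill A B) (twoColumnCells #A #B) (Set.Icc 1 n) := by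
  have hA : ∀ r < #A, nth A r < n := fun r hr =>
    mem_range.1 (hunion ▸ mem_union_left B (nth_mem hr))
  have hB : ∀ r < #B, nth B r < n := fun r hr =>
    mem_range.1 (hunion ▸ mem_union_right A (nth_mem hr))
  refine ⟨?_, ?_, ?_⟩
  · rintro ⟨c, r⟩ (⟨rfl, hr⟩ | ⟨rfl, hr⟩)
    · simpa [fill_zero hr] using hA r hr
    · simpa [fill_one hr] using hB r hr
  · rintro ⟨c, r⟩ (⟨rfl, hr⟩ | ⟨rfl, hr⟩) ⟨c', r'⟩ (⟨rfl, hr'⟩ | ⟨rfl, hr'⟩) h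
    · rw [fill_zero hr, fill_zero hr'] at h
      exact congrArg (Prod.mk 0) ((nth_strictMonoOn A).injOn hr hr' (Nat.succ_injective h))
    · rw [fill_zero hr, fill_one hr'] at h
      exact (disjoint_left.1 hdisj (nth_mem hr) (Nat.succ_injective h ▸ nth_mem hr')).elim
    · rw [fill_one hr, fill_zero hr'] at h
      exact (disjoint_left.1 hdisj (nth_mem hr') (Nat.succ_injective h ▸ nth_mem hr)).elim
    · rw [fill_one hr, fill_one hr'] at h
      exact congrArg (Prod.mk 1) ((nth_strictMonoOn B).injOn hr hr' (Nat.succ_injective h))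
  · intro x ⟨hx1, hxn⟩
    have hx : x - 1 ∈ A ∪ B := hunion ▸ mem_range.2 (by omega)
    rcases mem_union.1 hx with hxA | hxB
    · refine ⟨(0, countBelow A (x - 1)), Or.inl ⟨rfl, countBelow_lt_card hxA⟩, ?_⟩
      rw [fill_zero (countBelow_lt_card hxA), nth_countBelow hxA]
      omega
    · refine ⟨(1, countBelow B (x - 1)), Or.inr ⟨rfl, countBelow_lt_card hxB⟩, ?_⟩
      rw [fill_one (countBelow_lt_card hxB), nth_countBelow hxB]
      omega

lemma isSYT_fill {lam : List ℕ} (hcells : Cells lam = twoColumnCells #A #B) (hsum : lam.sum = n)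
    (hdisj : Disjoint A B) (hunion : A ∪ B = range n) (hrow : ∀ r < #B, nth A r < nth B r) :
    IsSYT lam (fill A B) := by
  rw [IsSYT, hcells, hsum]
  refine ⟨bijOn_fill hdisj hunion, ?_, ?_, ?_⟩
  · rintro ⟨c, r⟩ (⟨rfl, hr⟩ | ⟨rfl, hr⟩) ⟨c', r'⟩ (⟨rfl, hr'⟩ | ⟨rfl, hr'⟩) hc h <;>
      simp only [zero_ne_one, one_ne_zero] at hc
    · rw [fill_zero hr, fill_zero hr']
      exact Nat.succ_lt_succ (nth_strictMonoOn A hr hr' h)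
    · rw [fill_one hr, fill_one hr']
      exact Nat.succ_lt_succ (nth_strictMonoOn B hr hr' h)
  · rintro ⟨c, r⟩ (⟨rfl, hr⟩ | ⟨rfl, hr⟩) ⟨c', r'⟩ (⟨rfl, hr'⟩ | ⟨rfl, hr'⟩) (rfl : r = r') h <;>
      simp only [lt_self_iff_false, Nat.not_lt_zero] at h
    rw [fill_zero hr, fill_one hr']
    exact Nat.succ_lt_succ (hrow r hr')
  · rintro ⟨_ | _ | c, r⟩ hp <;> simp_all [fill, twoColumnCells]

end Fill

/-- Tableau entries `1, …, n` are encoded by the elements `0, …, n-1` of `range n`, here those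
in rows `0, …, k-1` of column `c`. -/
def colSet (T : ℕ × ℕ → ℕ) (c k : ℕ) : Finset ℕ := (range k).image fun r => T (c, r) - 1

lemma colSet_fill_one (A B : Finset ℕ) : colSet (fill A B) 1 #B = B := by
  conv_rhs => rw [← image_nth_range_card B]
  refine image_congr fun r hr => ?_
  simp [fill_one (mem_range.1 hr)]

end TwoColumnSYT

namespace IsSYT

open TwoColumnSYT

variable {lam : List ℕ} {T : ℕ × ℕ → ℕ} {a b c k n : ℕ}

lemma one_le (hT : IsSYT lam T) {p : ℕ × ℕ} (hp : p ∈ Cells lam) : 1 ≤ T p := (hT.1.mapsTo hp).1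

lemma strictMonoOn_column (hT : IsSYT lam T) (hcol : ∀ r < k, (c, r) ∈ Cells lam) :
    StrictMonoOn (fun r => T (c, r) - 1) (Set.Iio k) := fun r hr r' hr' h => by
  have := hT.2.1 _ (hcol r hr) _ (hcol r' hr') rfl h
  have := hT.one_le (hcol r hr)
  simp only
  omega

lemma card_colSet (hT : IsSYT lam T) (hcol : ∀ r < k, (c, r) ∈ Cells lam) :
    #(colSet T c k) = k := by
  rw [colSet, card_image_of_injOn (by simpa using (hT.strictMonoOn_column hcol).injOn), card_range]

lemma apply_eq_nth_colSet (hT : IsSYT lam T) (hcol : ∀ r < k, (c, r) ∈ Cells lam) {r : ℕ}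
    (hr : r < k) : T (c, r) = nth (colSet T c k) r + 1 := by
  have := eq_nth_image_of_strictMonoOn (hT.strictMonoOn_column hcol) hr
  have := hT.one_le (hcol r hr)
  rw [colSet]
  omega

lemma colSet_subset_range (hT : IsSYT lam T) (hsum : lam.sum = n)
    (hcol : ∀ r < k, (c, r) ∈ Cells lam) : colSet T c k ⊆ range n := by
  intro x hx
  obtain ⟨r, hr, rfl⟩ := mem_image.1 hx
  have := hT.1.mapsTo (hcol r (mem_range.1 hr))
  rw [hsum] at this
  exact mem_range.2 (by simp at this; omega)

lemma eq_fill (hT : IsSYT lam T) (hcells : Cells lam = twoColumnCells a b) :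
    T = fill (colSet T 0 a) (colSet T 1 b) := by
  have h0 : ∀ r < a, (0, r) ∈ Cells lam := fun r hr => hcells ▸ Or.inl ⟨rfl, hr⟩
  have h1 : ∀ r < b, (1, r) ∈ Cells lam := fun r hr => hcells ▸ Or.inr ⟨rfl, hr⟩
  have hout : ∀ p ∉ twoColumnCells a b, T p = 0 := hcells ▸ hT.2.2.2
  funext ⟨c, r⟩
  rcases c with _ | _ | c
  · by_cases hr : r < a
    · rw [fill_zero (by rwa [hT.card_colSet h0]), hT.apply_eq_nth_colSet h0 hr]
    · rw [hout _ (by simp [twoColumnCells, hr])]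
      simp [fill, hT.card_colSet h0, hr]
  · by_cases hr : r < b
    · rw [fill_one (by rwa [hT.card_colSet h1]), hT.apply_eq_nth_colSet h1 hr]
    · rw [hout _ (by simp [twoColumnCells, hr])]
      simp [fill, hT.card_colSet h1, hr]
  · rw [hout _ (by simp [twoColumnCells])]
    rfl

lemma colSet_zero_eq (hT : IsSYT lam T) (hcells : Cells lam = twoColumnCells a b)
    (hsum : lam.sum = n) : colSet T 0 a = range n \ colSet T 1 b := by
  obtain ⟨⟨hmaps, hinj, hsurj⟩, -⟩ := hT
  rw [hcells, hsum] at hmaps hsurj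
  rw [hcells] at hinj
  ext x
  simp only [colSet, Finset.mem_sdiff, Finset.mem_range, Finset.mem_image]
  constructor
  · rintro ⟨r, hr, rfl⟩
    have h0 : (0, r) ∈ twoColumnCells a b := Or.inl ⟨rfl, hr⟩
    have hT0 := hmaps h0
    refine ⟨by simp at hT0; omega, ?_⟩
    rintro ⟨s, hs, heq⟩
    have h1 : (1, s) ∈ twoColumnCells a b := Or.inr ⟨rfl, hs⟩
    have hT1 := hmaps h1
    simp only [Set.mem_Icc] at hT0 hT1
    simpa using hinj h1 h0 (by omega)
  · rintro ⟨hx, hxB⟩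
    obtain ⟨⟨c, r⟩, (⟨rfl, hr⟩ | ⟨rfl, hr⟩), hp⟩ := hsurj (show x + 1 ∈ Set.Icc 1 n by simp; omega)
    · exact ⟨r, hr, by simp [hp]⟩
    · exact absurd ⟨r, hr, by simp [hp]⟩ hxB

lemma isBallot_colSet_one (hT : IsSYT lam T) (hcells : Cells lam = twoColumnCells a b)
    (hsum : lam.sum = n) (hba : b ≤ a) : IsBallot (colSet T 1 b) := by
  have h0 : ∀ r < a, (0, r) ∈ Cells lam := fun r hr => hcells ▸ Or.inl ⟨rfl, hr⟩
  have h1 : ∀ r < b, (1, r) ∈ Cells lam := fun r hr => hcells ▸ Or.inr ⟨rfl, hr⟩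
  have hB := hT.colSet_subset_range hsum h1
  have hA : a = n - b := by
    rw [← hT.card_colSet h0, hT.colSet_zero_eq hcells hsum, card_sdiff_of_subset hB, card_range,
      hT.card_colSet h1]
  rw [isBallot_iff_nth_sdiff_lt hB (by rw [hT.card_colSet h1]; omega),
    ← hT.colSet_zero_eq hcells hsum, hT.card_colSet h1]
  intro r hr
  have := hT.2.2.1 _ (h0 r (by omega)) _ (h1 r hr) rfl zero_lt_one
  rw [hT.apply_eq_nth_colSet h0 (by omega), hT.apply_eq_nth_colSet h1 hr] at this
  omega

end IsSYT

namespace TwoColumnSYT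

def IsTwoColumnSYT (n : ℕ) (lam : List ℕ) (T : ℕ × ℕ → ℕ) : Prop :=
  lam.length ≤ 2 ∧ lam.Pairwise (· ≥ ·) ∧ (∀ x ∈ lam, 0 < x) ∧ lam.sum = n ∧ IsSYT lam T

lemma tau_two_eq (n : ℕ) :
    tau 2 n = Nat.card {p : List ℕ × (ℕ × ℕ → ℕ) // IsTwoColumnSYT n p.1 p.2} := rfl

variable {n : ℕ}

lemma isTwoColumnSYT_fill {S : Finset ℕ} (hS : S ⊆ range n) (hb : IsBallot S) :
    IsTwoColumnSYT n (twoColumnShape (n - #S) #S) (fill (range n \ S) S) := by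
  have hcard := hb.two_mul_card_le hS
  have hba : #S ≤ n - #S := by omega
  obtain ⟨hlen, hsort, hpos⟩ := twoColumnShape_isPartition hba
  have hsum : (twoColumnShape (n - #S) #S).sum = n := by rw [sum_twoColumnShape]; omega
  refine ⟨hlen, hsort, hpos, hsum,
    isSYT_fill ?_ hsum disjoint_sdiff_self_left (sdiff_union_of_subset hS) ?_⟩
  · rw [card_sdiff_of_subset hS, card_range, cells_twoColumnShape hba]
  · exact (isBallot_iff_nth_sdiff_lt hS hcard).1 hb

namespace IsTwoColumnSYT

variable {lam : List ℕ} {T : ℕ × ℕ → ℕ}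

lemma colSet_mem_ballotSubsets (h : IsTwoColumnSYT n lam T) :
    colSet T 1 (lam.getD 1 0) ∈ ballotSubsets n := by
  obtain ⟨hlen, hsort, hpos, hsum, hT⟩ := h
  obtain ⟨a, b, hba, rfl⟩ := eq_twoColumnShape hlen hsort hpos
  have hcells := cells_twoColumnShape hba
  rw [getD_one_twoColumnShape hba, mem_ballotSubsets]
  exact ⟨hT.colSet_subset_range hsum fun r hr => hcells ▸ Or.inr ⟨rfl, hr⟩,
    hT.isBallot_colSet_one hcells hsum hba⟩

lemma fill_colSet (h : IsTwoColumnSYT n lam T) :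
    (twoColumnShape (n - #(colSet T 1 (lam.getD 1 0))) #(colSet T 1 (lam.getD 1 0)),
      fill (range n \ colSet T 1 (lam.getD 1 0)) (colSet T 1 (lam.getD 1 0))) = (lam, T) := by
  obtain ⟨hlen, hsort, hpos, hsum, hT⟩ := h
  obtain ⟨a, b, hba, rfl⟩ := eq_twoColumnShape hlen hsort hpos
  have hcells := cells_twoColumnShape hba
  have hb : #(colSet T 1 b) = b := hT.card_colSet fun r hr => hcells ▸ Or.inr ⟨rfl, hr⟩
  rw [sum_twoColumnShape] at hsum
  subst hsum
  rw [getD_one_twoColumnShape hba, hb, ← hT.colSet_zero_eq hcells (sum_twoColumnShape a b),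
    ← hT.eq_fill hcells, Nat.add_sub_cancel]

end IsTwoColumnSYT

noncomputable def ballotEquiv (n : ℕ) :
    ballotSubsets n ≃ {p : List ℕ × (ℕ × ℕ → ℕ) // IsTwoColumnSYT n p.1 p.2} where
  toFun S := ⟨(twoColumnShape (n - #S.1) #S.1, fill (range n \ S.1) S.1),
    isTwoColumnSYT_fill (mem_ballotSubsets.1 S.2).1 (mem_ballotSubsets.1 S.2).2⟩
  invFun p := ⟨colSet p.1.2 1 (p.1.1.getD 1 0), p.2.colSet_mem_ballotSubsets⟩
  left_inv S := by
    obtain ⟨hS, hb⟩ := mem_ballotSubsets.1 S.2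
    have := hb.two_mul_card_le hS
    exact Subtype.ext <| by
      change colSet _ 1 ((twoColumnShape (n - #S.1) #S.1).getD 1 0) = S.1
      rw [getD_one_twoColumnShape (by omega), colSet_fill_one]
  right_inv p := Subtype.ext p.2.fill_colSet

end TwoColumnSYT

theorem stmt4 (n : ℕ) : tau 2 n = n.choose (n / 2) := by
  rw [TwoColumnSYT.tau_two_eq, ← Nat.card_congr (TwoColumnSYT.ballotEquiv n),
    Nat.card_eq_finsetCard, TwoColumnSYT.card_ballotSubsets]
end

section
/- For n ≥ 1, β(n,0) = β(n−1,0) + β(n−1,1). -/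
/-
The largest entry `n` of a standard Young tableau sits at a corner of its shape, and deleting
it leaves a standard Young tableau with `n - 1` cells; conversely, writing `n` into a cell added
at an outer corner gives back a standard Young tableau, and the two operations are inverse.
If the second and third columns have equal length, the second column has no corner, so the
entry `n` sits at the bottom of the first or of the third column. Removing it there leaves a
shape whose second and third columns differ by `0`, resp. `1`, and every tableau of either
kind arises exactly once.
-/

open Finset Filter Topology

/-- Standard Young tableaux on `n` cells, with at most `s` columns
(column lengths positive and weakly decreasing), such that the difference
between the lengths of the second and third columns equals `i`. -/
def Y (s n i : ℕ) : Set (List ℕ × (ℕ × ℕ → ℕ)) :=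
  {p | p.1.length ≤ s ∧ p.1.Pairwise (· ≥ ·) ∧ (∀ x ∈ p.1, 0 < x) ∧
       p.1.sum = n ∧ p.1.getD 1 0 - p.1.getD 2 0 = i ∧ IsSYT p.1 p.2}

/-- `gamma s n i = |Y s n i|`. -/
noncomputable def gamma (s n i : ℕ) : ℕ := Nat.card (Y s n i)

def IsShape (lam : List ℕ) : Prop :=
  lam.Pairwise (· ≥ ·) ∧ ∀ x ∈ lam, 0 < x

/-- Adds a cell at the bottom of column `c`; meaningful only for `c ≤ lam.length`, where
`c = lam.length` opens a new column. -/
def bump (lam : List ℕ) (c : ℕ) : List ℕ :=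
  if c < lam.length then lam.set c (lam.getD c 0 + 1) else lam ++ [1]

section ColumnLengths

variable {lam mu : List ℕ}

lemma lt_length_of_getD_pos {j : ℕ} (h : 0 < lam.getD j 0) : j < lam.length := by
  by_contra hj
  rw [List.getD_eq_default _ _ (not_lt.mp hj)] at h
  exact lt_irrefl 0 h

lemma lt_length_iff_getD_pos (hpos : ∀ x ∈ lam, 0 < x) {j : ℕ} :
    j < lam.length ↔ 0 < lam.getD j 0 := by
  refine ⟨fun hj => ?_, lt_length_of_getD_pos⟩
  rw [List.getD_eq_getElem _ _ hj]
  exact hpos _ (List.getElem_mem hj)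

lemma eq_of_forall_getD_eq (hlam : ∀ x ∈ lam, 0 < x) (hmu : ∀ x ∈ mu, 0 < x)
    (h : ∀ j, lam.getD j 0 = mu.getD j 0) : lam = mu := by
  have hlen : lam.length = mu.length := eq_of_forall_lt_iff fun j => by
    rw [lt_length_iff_getD_pos hlam, lt_length_iff_getD_pos hmu, h]
  refine List.ext_getElem hlen fun j hj hj' => ?_
  simpa only [List.getD_eq_getElem _ _ hj, List.getD_eq_getElem _ _ hj'] using h j

lemma antitone_getD_iff : Antitone (fun j => lam.getD j 0) ↔ lam.Pairwise (· ≥ ·) := by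
  rw [← List.sortedGE_iff_pairwise, List.sortedGE_iff_getElem_ge_getElem_of_le]
  refine ⟨fun h i j hi hj hji => ?_, fun h i j hij => ?_⟩
  · simpa only [List.getD_eq_getElem _ _ hi, List.getD_eq_getElem _ _ hj] using h hji
  · by_cases hj : j < lam.length
    · simp only [List.getD_eq_getElem _ _ hj, List.getD_eq_getElem _ _ (hij.trans_lt hj)]
      exact h hij
    · simp only [List.getD_eq_default _ _ (not_lt.mp hj), zero_le]

lemma getD_bump (c j : ℕ) (hc : c ≤ lam.length) :
    (bump lam c).getD j 0 = if j = c then lam.getD c 0 + 1 else lam.getD j 0 := by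
  unfold bump
  rcases hc.lt_or_eq with hlt | rfl
  · by_cases hjc : j = c
    · subst hjc; simp [hlt]
    · simp [hlt, hjc, Ne.symm hjc]
  · rcases lt_trichotomy j lam.length with hj | rfl | hj
    · simp [List.getElem?_append_left hj, hj.ne]
    · simp
    · simp [hj.ne', List.getElem?_eq_none (by simpa using hj : (lam ++ [1]).length ≤ j),
        List.getElem?_eq_none hj.le]

lemma getD_bump_self {c : ℕ} (hc : c ≤ lam.length) :
    (bump lam c).getD c 0 = lam.getD c 0 + 1 := by
  rw [getD_bump c c hc, if_pos rfl]

lemma getD_bump_of_ne {c j : ℕ} (hc : c ≤ lam.length) (hj : j ≠ c) :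
    (bump lam c).getD j 0 = lam.getD j 0 := by
  rw [getD_bump c j hc, if_neg hj]

lemma length_bump (c : ℕ) (hc : c ≤ lam.length) :
    (bump lam c).length = max lam.length (c + 1) := by
  unfold bump
  split_ifs <;> simp only [List.length_set, List.length_append, List.length_singleton] <;> omega

lemma sum_bump (c : ℕ) : (bump lam c).sum = lam.sum + 1 := by
  unfold bump
  split_ifs with hlt
  · have hsplit := congrArg List.sum (List.take_append_drop c lam)
    rw [List.drop_eq_getElem_cons hlt, List.sum_append, List.sum_cons] at hsplit
    simp only [List.sum_set, hlt, if_true, List.getD_eq_getElem _ _ hlt]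
    omega
  · simp


lemma bump_cons_zero (a : ℕ) (l : List ℕ) : bump (a :: l) 0 = (a + 1) :: l := by
  simp [bump]

lemma bump_cons_succ (a c : ℕ) (l : List ℕ) : bump (a :: l) (c + 1) = a :: bump l c := by
  unfold bump
  split_ifs <;> simp_all

lemma cells_bump (c : ℕ) (hc : c ≤ lam.length) :
    Cells (bump lam c) = insert (c, lam.getD c 0) (Cells lam) := by
  ext ⟨x, y⟩
  have hzero : ∀ j, lam.length ≤ j → lam.getD j 0 = 0 := fun _ => List.getD_eq_default _ _
  simp only [Cells, Set.mem_insert_iff, Set.mem_ofPred_eq, Prod.mk.injEq, getD_bump c x hc,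
    length_bump c hc]
  by_cases hx : x = c
  · subst hx
    have := hzero x
    simp only [if_true, true_and]
    omega
  · have := hzero x
    simp only [hx, if_false, false_and, false_or]
    omega

lemma forall_mem_pos_iff : (∀ x ∈ lam, 0 < x) ↔ ∀ j < lam.length, 0 < lam.getD j 0 := by
  rw [List.forall_mem_iff_getElem]
  exact forall₂_congr fun j hj => by rw [List.getD_eq_getElem _ _ hj]

lemma eq_of_bump_eq (hlam : ∀ x ∈ lam, 0 < x) (hmu : ∀ x ∈ mu, 0 < x) {c : ℕ}
    (hcl : c ≤ lam.length) (hcm : c ≤ mu.length) (h : bump lam c = bump mu c) : lam = mu :=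
  eq_of_forall_getD_eq hlam hmu fun j => by
    have hj := congrArg (·.getD j 0) h
    simp only [getD_bump c j hcl, getD_bump c j hcm] at hj
    split_ifs at hj with hjc
    · subst hjc; omega
    · exact hj

lemma exists_bump_eq_of_pos (hpos : ∀ x ∈ lam, 0 < x) {c : ℕ} (hc : c < lam.length)
    (hcorner : lam.getD (c + 1) 0 < lam.getD c 0) :
    ∃ mu, (∀ x ∈ mu, 0 < x) ∧ c ≤ mu.length ∧ bump mu c = lam := by
  induction lam generalizing c with
  | nil => simp at hc
  | cons a l ih =>
    have ha := hpos a (by simp)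
    have hl : ∀ x ∈ l, 0 < x := fun x hx => hpos x (by simp [hx])
    rcases c with _ | c
    · by_cases ha1 : a = 1
      · have hl0 : l = [] := List.eq_nil_of_length_eq_zero <| by
          have := (lt_length_iff_getD_pos hl (j := 0)).not
          simp only [List.getD_cons_succ, List.getD_cons_zero] at hcorner this
          omega
        exact ⟨[], by simp, le_rfl, by simp [bump, ha1, hl0]⟩
      · refine ⟨(a - 1) :: l, ?_, Nat.zero_le _, ?_⟩
        intro x hx
        rcases List.mem_cons.mp hx with rfl | hx
        · omega
        · exact hl x hx
        · rw [bump_cons_zero, Nat.sub_add_cancel ha]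
    · obtain ⟨mu, hmu, hcmu, hbump⟩ := ih hl (by simpa using hc) (by simpa using hcorner)
      refine ⟨a :: mu, ?_, by simpa using hcmu, ?_⟩
      · intro x hx
        rcases List.mem_cons.mp hx with rfl | hx
        · exact ha
        · exact hmu x hx
      · rw [bump_cons_succ, hbump]

lemma isShape_bump (h : IsShape lam) {c : ℕ} (hc : c ≤ lam.length)
    (hcorner : 0 < c → lam.getD c 0 < lam.getD (c - 1) 0) : IsShape (bump lam c) := by
  have hanti := antitone_getD_iff.mpr h.1
  refine ⟨antitone_getD_iff.mp (antitone_nat_of_succ_le fun j => ?_), ?_⟩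
  · have hj : lam.getD (j + 1) 0 ≤ lam.getD j 0 := hanti (Nat.le_succ j)
    simp only [getD_bump c _ hc]
    split_ifs with h1 h2 h2
    · omega
    · subst h1
      simpa using hcorner j.succ_pos
    · subst h2
      omega
    · exact hj
  · rw [forall_mem_pos_iff, length_bump c hc]
    intro j hj
    rw [getD_bump c j hc]
    split_ifs with hjc
    · omega
    · exact forall_mem_pos_iff.mp h.2 j (by omega)

lemma isShape_of_isShape_bump (hpos : ∀ x ∈ lam, 0 < x) {c : ℕ} (hc : c ≤ lam.length)
    (h : IsShape (bump lam c)) (hcorner : lam.getD (c + 1) 0 ≤ lam.getD c 0) : IsShape lam := by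
  have hanti := antitone_getD_iff.mpr h.1
  refine ⟨antitone_getD_iff.mp (antitone_nat_of_succ_le fun j => ?_), hpos⟩
  have hj : (bump lam c).getD (j + 1) 0 ≤ (bump lam c).getD j 0 := hanti (Nat.le_succ j)
  simp only [getD_bump c _ hc] at hj
  split_ifs at hj with h1 h2 h2
  · omega
  · subst h1
    omega
  · subst h2
    exact hcorner
  · exact hj

lemma IsShape.exists_bump_eq (h : IsShape lam) {c : ℕ} (hc : c < lam.length)
    (hcorner : lam.getD (c + 1) 0 < lam.getD c 0) :
    ∃ mu, IsShape mu ∧ c ≤ mu.length ∧ bump mu c = lam := by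
  obtain ⟨mu, hpos, hcmu, rfl⟩ := exists_bump_eq_of_pos h.2 hc hcorner
  refine ⟨mu, isShape_of_isShape_bump hpos hcmu h ?_, hcmu, rfl⟩
  rw [getD_bump_self hcmu, getD_bump_of_ne hcmu (by omega : c + 1 ≠ c)] at hcorner
  omega

lemma IsShape.length_le_sum (h : IsShape lam) : lam.length ≤ lam.sum :=
  List.length_le_sum_of_one_le _ h.2

end ColumnLengths

section Tableaux

variable {lam mu : List ℕ} {T : ℕ × ℕ → ℕ}

lemma mk_getD_notMem_cells (c : ℕ) : (c, lam.getD c 0) ∉ Cells lam :=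
  fun hp => lt_irrefl _ hp.2

lemma IsSYT.eq_zero (h : IsSYT lam T) {p : ℕ × ℕ} (hp : p ∉ Cells lam) : T p = 0 :=
  h.2.2.2 p hp

lemma IsSYT.exists_eq_sum (h : IsSYT lam T) (hsum : 0 < lam.sum) :
    ∃ p ∈ Cells lam, T p = lam.sum :=
  h.1.surjOn ⟨hsum, le_rfl⟩

lemma IsSYT.corner_of_eq_sum (h : IsSYT lam T) {p : ℕ × ℕ} (hp : p ∈ Cells lam)
    (hT : T p = lam.sum) : p.2 + 1 = lam.getD p.1 0 ∧ lam.getD (p.1 + 1) 0 ≤ p.2 := by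
  have hp2 : p.2 < lam.getD p.1 0 := hp.2
  constructor
  · by_contra hne
    have hbelow : (p.1, p.2 + 1) ∈ Cells lam := ⟨hp.1, show p.2 + 1 < lam.getD p.1 0 by omega⟩
    have := h.2.1 p hp _ hbelow rfl (Nat.lt_succ_self _)
    have := (h.1.mapsTo hbelow).2
    omega
  · by_contra! hlt
    have hright : (p.1 + 1, p.2) ∈ Cells lam :=
      ⟨lt_length_of_getD_pos (show 0 < lam.getD (p.1 + 1) 0 by omega), hlt⟩
    have := h.2.2.1 p hp _ hright rfl (Nat.lt_succ_self _)
    have := (h.1.mapsTo hright).2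
    omega

lemma isSYT_update_iff {p : ℕ × ℕ} (hcells : Cells mu = insert p (Cells lam))
    (hsum : mu.sum = lam.sum + 1) (hcol : ∀ q ∈ Cells lam, q.1 = p.1 → q.2 < p.2)
    (hrow : ∀ q ∈ Cells lam, q.2 = p.2 → q.1 < p.1) (hTp : T p = 0) :
    IsSYT mu (Function.update T p (lam.sum + 1)) ↔ IsSYT lam T := by
  set T' := Function.update T p (lam.sum + 1)
  have hp : p ∉ Cells lam := fun hp => lt_irrefl _ (hcol p hp rfl)
  have hT'p : T' p = lam.sum + 1 := Function.update_self _ _ _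
  have hT' : Set.EqOn T' T (Cells lam) := fun q hq =>
    Function.update_of_ne (ne_of_mem_of_not_mem hq hp) _ _
  have hbij : Set.BijOn T' (Cells mu) (Set.Icc 1 mu.sum) ↔
      Set.BijOn T (Cells lam) (Set.Icc 1 lam.sum) := by
    have hIcc : Set.Icc 1 mu.sum = insert (T' p) (Set.Icc 1 lam.sum) := by
      ext k
      simp only [hsum, hT'p, Set.mem_Icc, Set.mem_insert_iff]
      omega
    rw [hcells, hIcc, Set.BijOn.insert_iff hp (by simp [hT'p])]
    exact ⟨fun h => h.congr hT', fun h => h.congr hT'.symm⟩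
  unfold IsSYT
  rw [hbij, hcells]
  constructor
  · rintro ⟨hb, hc, hr, hz⟩
    refine ⟨hb, fun q hq r hr' h1 h2 => ?_, fun q hq r hr' h1 h2 => ?_, fun q hq => ?_⟩
    · simpa only [hT' hq, hT' hr'] using hc q (Or.inr hq) r (Or.inr hr') h1 h2
    · simpa only [hT' hq, hT' hr'] using hr q (Or.inr hq) r (Or.inr hr') h1 h2
    · by_cases hqp : q = p
      · rwa [hqp]
      · simpa [T', hqp] using hz q (by simp [hqp, hq])
  · rintro ⟨hb, hc, hr, hz⟩
    have hmax : ∀ q ∈ Cells lam, T' q < T' p := fun q hq => by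
      rw [hT' hq, hT'p]
      exact Nat.lt_succ_of_le (hb.mapsTo hq).2
    refine ⟨hb, ?_, ?_, fun q hq => ?_⟩
    · rintro q (rfl | hq) r (rfl | hr') h1 h2
      · exact absurd h2 (lt_irrefl _)
      · exact (lt_asymm h2 (hcol r hr' h1.symm)).elim
      · exact hmax q hq
      · simpa only [hT' hq, hT' hr'] using hc q hq r hr' h1 h2
    · rintro q (rfl | hq) r (rfl | hr') h1 h2
      · exact absurd h2 (lt_irrefl _)
      · exact (lt_asymm h2 (hrow r hr' h1.symm)).elim
      · exact hmax q hq
      · simpa only [hT' hq, hT' hr'] using hr q hq r hr' h1 h2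
    · simp only [Set.mem_insert_iff, not_or] at hq
      exact (Function.update_of_ne hq.1 _ _).trans (hz q hq.2)

lemma isSYT_bump_update_iff (hsorted : lam.Pairwise (· ≥ ·)) {c : ℕ} (hc : c ≤ lam.length)
    (hT : T (c, lam.getD c 0) = 0) :
    IsSYT (bump lam c) (Function.update T (c, lam.getD c 0) (lam.sum + 1)) ↔ IsSYT lam T := by
  refine isSYT_update_iff (cells_bump c hc) (sum_bump c) (fun q hq (hq1 : q.1 = c) => hq1 ▸ hq.2)
    (fun q hq hq2 => ?_) hT
  by_contra! hle
  have hanti : lam.getD q.1 0 ≤ lam.getD c 0 := antitone_getD_iff.mpr hsorted hle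
  have := hq.2
  omega

end Tableaux

def tableaux (n : ℕ) : Set (List ℕ × (ℕ × ℕ → ℕ)) :=
  {t | IsShape t.1 ∧ t.1.sum = n ∧ IsSYT t.1 t.2}

def addCell (c : ℕ) (t : List ℕ × (ℕ × ℕ → ℕ)) : List ℕ × (ℕ × ℕ → ℕ) :=
  (bump t.1 c, Function.update t.2 (c, t.1.getD c 0) (t.1.sum + 1))

section AddCell

variable {n c d : ℕ} {t u : List ℕ × (ℕ × ℕ → ℕ)}

lemma isSYT_addCell (ht : t ∈ tableaux n) (hc : c ≤ t.1.length) :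
    IsSYT (addCell c t).1 (addCell c t).2 :=
  (isSYT_bump_update_iff ht.1.1 hc (ht.2.2.eq_zero (mk_getD_notMem_cells c))).mpr ht.2.2

lemma addCell_mem_tableaux (ht : t ∈ tableaux n) (hc : c ≤ t.1.length)
    (hcorner : 0 < c → t.1.getD c 0 < t.1.getD (c - 1) 0) : addCell c t ∈ tableaux (n + 1) :=
  ⟨isShape_bump ht.1 hc hcorner, by rw [addCell, sum_bump, ht.2.1], isSYT_addCell ht hc⟩

lemma eq_of_addCell_eq (ht : t ∈ tableaux n) (hu : u ∈ tableaux n) (hc : c ≤ t.1.length)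
    (hd : d ≤ u.1.length) (h : addCell c t = addCell d u) : c = d ∧ t = u := by
  have hshape : bump t.1 c = bump u.1 d := congrArg Prod.fst h
  have hentries := congrArg Prod.snd h
  simp only [addCell] at hentries
  have hcell : (c, t.1.getD c 0) = (d, u.1.getD d 0) := by
    refine (isSYT_addCell ht hc).1.injOn ?_ ?_ ?_
    · simp [addCell, cells_bump c hc]
    · simp [addCell, hshape, cells_bump d hd]
    · simp only [addCell]
      rw [Function.update_self, hentries, Function.update_self, ht.2.1, hu.2.1]
  obtain rfl : c = d := congrArg Prod.fst hcell
  have hlam : t.1 = u.1 := eq_of_bump_eq ht.1.2 hu.1.2 hc hd hshape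
  refine ⟨rfl, Prod.ext hlam (funext fun q => ?_)⟩
  by_cases hq : q = (c, t.1.getD c 0)
  · rw [hq, ht.2.2.eq_zero (mk_getD_notMem_cells c), hlam,
      hu.2.2.eq_zero (mk_getD_notMem_cells c)]
  · have := congrFun hentries q
    rwa [Function.update_of_ne hq, Function.update_of_ne (hlam ▸ hq)] at this

lemma exists_addCell_eq (ht : t ∈ tableaux (n + 1)) :
    ∃ c, ∃ u ∈ tableaux n, c ≤ u.1.length ∧ addCell c u = t := by
  obtain ⟨lam, T⟩ := t
  obtain ⟨hshape, hsum, hsyt⟩ : IsShape lam ∧ lam.sum = n + 1 ∧ IsSYT lam T := ht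
  obtain ⟨⟨c, r⟩, hp, hTp⟩ := hsyt.exists_eq_sum (by omega)
  obtain ⟨hlast, hcorner⟩ : r + 1 = lam.getD c 0 ∧ lam.getD (c + 1) 0 ≤ r :=
    hsyt.corner_of_eq_sum hp hTp
  obtain ⟨mu, hmu, hc, rfl⟩ := hshape.exists_bump_eq (c := c) hp.1 (by omega)
  obtain rfl : r = mu.getD c 0 := by rw [getD_bump_self hc] at hlast; omega
  have hrestore : Function.update (Function.update T (c, mu.getD c 0) 0) (c, mu.getD c 0)
      (mu.sum + 1) = T := by
    rw [Function.update_idem, ← sum_bump c, ← hTp, Function.update_eq_self]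
  have hmusum : mu.sum = n := by simp only [sum_bump] at hsum; omega
  refine ⟨c, (mu, Function.update T (c, mu.getD c 0) 0), ⟨hmu, hmusum, ?_⟩, hc, ?_⟩
  · rw [← isSYT_bump_update_iff hmu.1 hc (Function.update_self _ _ _), hrestore]
    exact hsyt
  · exact Prod.ext rfl hrestore

end AddCell

lemma finite_tableaux (n : ℕ) : (tableaux n).Finite := by
  induction n with
  | zero =>
    refine (Set.finite_singleton ([], 0)).subset fun t ht => ?_
    obtain ⟨lam, T⟩ := t
    obtain ⟨hshape, hsum, hsyt⟩ : IsShape lam ∧ lam.sum = 0 ∧ IsSYT lam T := ht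
    obtain rfl : lam = [] := List.eq_nil_of_length_eq_zero <| by
      have := hshape.length_le_sum
      omega
    obtain rfl : T = 0 := funext fun q => hsyt.eq_zero (by simp [Cells])
    rfl
  | succ n ih =>
    refine ((Set.finite_Iic n).biUnion fun c _ => ih.image (addCell c)).subset fun t ht => ?_
    obtain ⟨c, u, hu, hc, rfl⟩ := exists_addCell_eq ht
    exact Set.mem_biUnion (hc.trans (hu.2.1 ▸ hu.1.length_le_sum)) ⟨u, hu, rfl⟩

section ThreeColumns

variable {s n i : ℕ} {t : List ℕ × (ℕ × ℕ → ℕ)}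

lemma mem_Y_iff : t ∈ Y s n i ↔
    t ∈ tableaux n ∧ t.1.length ≤ s ∧ t.1.getD 1 0 - t.1.getD 2 0 = i := by
  simp only [Y, tableaux, IsShape, Set.mem_ofPred_eq]
  tauto

lemma Y_subset_tableaux : Y s n i ⊆ tableaux n := fun _ ht => (mem_Y_iff.mp ht).1

lemma two_le_length_of_mem_Y_one (ht : t ∈ Y s n 1) : 2 ≤ t.1.length :=
  lt_length_of_getD_pos (by have := (mem_Y_iff.mp ht).2.2; omega)

lemma addCell_zero_mem_Y (hs : 1 ≤ s) (ht : t ∈ Y s n i) : addCell 0 t ∈ Y s (n + 1) i := by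
  obtain ⟨htab, hlen, hdiff⟩ := mem_Y_iff.mp ht
  refine mem_Y_iff.mpr
    ⟨addCell_mem_tableaux htab (Nat.zero_le _) (absurd · (lt_irrefl 0)), ?_, ?_⟩
  · rw [addCell, length_bump 0 (Nat.zero_le _)]
    omega
  · rwa [addCell, getD_bump_of_ne (Nat.zero_le _) one_ne_zero,
      getD_bump_of_ne (Nat.zero_le _) two_ne_zero]

lemma addCell_two_mem_Y (hs : 3 ≤ s) (ht : t ∈ Y s n 1) : addCell 2 t ∈ Y s (n + 1) 0 := by
  have hc := two_le_length_of_mem_Y_one ht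
  obtain ⟨htab, hlen, hdiff⟩ := mem_Y_iff.mp ht
  have hcorner : t.1.getD 2 0 < t.1.getD 1 0 := by omega
  refine mem_Y_iff.mpr ⟨addCell_mem_tableaux htab hc fun _ => hcorner, ?_, ?_⟩
  · rw [addCell, length_bump 2 hc]
    omega
  · rw [addCell, getD_bump_self hc, getD_bump_of_ne hc (by norm_num)]
    omega

lemma Y_three_succ_zero :
    Y 3 (n + 1) 0 = addCell 0 '' Y 3 n 0 ∪ addCell 2 '' Y 3 n 1 := by
  ext t
  refine ⟨fun ht => ?_, ?_⟩
  · obtain ⟨htab, hlen, hdiff⟩ := mem_Y_iff.mp ht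
    obtain ⟨c, u, hu, hc, rfl⟩ := exists_addCell_eq htab
    have hanti := antitone_getD_iff.mpr htab.1.1
    have h21 : (bump u.1 c).getD 2 0 ≤ (bump u.1 c).getD 1 0 := hanti (by norm_num)
    have hu21 : u.1.getD 2 0 ≤ u.1.getD 1 0 := antitone_getD_iff.mpr hu.1.1 (by norm_num)
    simp only [addCell, length_bump c hc] at hlen hdiff h21
    have hulen : u.1.length ≤ 3 := by omega
    have hc3 : c < 3 := by omega
    interval_cases c
    · rw [getD_bump_of_ne hc one_ne_zero, getD_bump_of_ne hc two_ne_zero] at hdiff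
      exact Or.inl ⟨u, mem_Y_iff.mpr ⟨hu, hulen, hdiff⟩, rfl⟩
    · rw [getD_bump_self hc, getD_bump_of_ne hc (by norm_num)] at hdiff
      omega
    · rw [getD_bump_self hc, getD_bump_of_ne hc (by norm_num)] at hdiff h21
      exact Or.inr ⟨u, mem_Y_iff.mpr ⟨hu, hulen, by omega⟩, rfl⟩
  · rintro (⟨u, hu, rfl⟩ | ⟨u, hu, rfl⟩)
    · exact addCell_zero_mem_Y (by norm_num) hu
    · exact addCell_two_mem_Y le_rfl hu

end ThreeColumns

lemma ncard_Y_three_succ_zero (n : ℕ) :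
    (Y 3 (n + 1) 0).ncard = (Y 3 n 0).ncard + (Y 3 n 1).ncard := by
  have hfin : ∀ i, (Y 3 n i).Finite := fun i => (finite_tableaux n).subset Y_subset_tableaux
  have hinj : ∀ {c i},
      (∀ t ∈ Y 3 n i, c ≤ t.1.length) → Set.InjOn (addCell c) (Y 3 n i) :=
    fun hc t ht u hu h =>
      (eq_of_addCell_eq (Y_subset_tableaux ht) (Y_subset_tableaux hu) (hc t ht) (hc u hu) h).2
  have hdisj : Disjoint (addCell 0 '' Y 3 n 0) (addCell 2 '' Y 3 n 1) := by
    rw [Set.disjoint_left]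
    rintro _ ⟨t, ht, rfl⟩ ⟨u, hu, h⟩
    have := (eq_of_addCell_eq (Y_subset_tableaux hu) (Y_subset_tableaux ht)
      (two_le_length_of_mem_Y_one hu) (Nat.zero_le _) h).1
    omega
  rw [Y_three_succ_zero, Set.ncard_union_eq hdisj ((hfin 0).image _) ((hfin 1).image _),
    (hinj fun _ _ => Nat.zero_le _).ncard_image,
    (hinj fun _ => two_le_length_of_mem_Y_one).ncard_image]

theorem stmt7 (n : ℕ) (hn : 1 ≤ n) :
    gamma 3 n 0 = gamma 3 (n - 1) 0 + gamma 3 (n - 1) 1 := by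
  obtain ⟨m, rfl⟩ : ∃ m, n = m + 1 := ⟨n - 1, by omega⟩
  simp only [gamma, Nat.card_coe_set_eq, Nat.add_sub_cancel]
  exact ncard_Y_three_succ_zero m
end

section
/- For n ≥ 1 and 1 ≤ i ≤ ⌊n/2⌋, β(n,i) = β(n−1,i−1) + β(n−1,i) + β(n−1,i+1) − r(n,i), where r(n,i) is the number of standard Young tableaux of shape ((n+i−2)/3, (n+i−2)/3, (n−2i+1)/3) when n − 2i ≡ 2 (mod 3), and r(n,i) = 0 otherwise. -/
open Finset Filter Topology

/-- `rr n i` : the number of standard Young tableaux of shape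
`((n+i-2)/3, (n+i-2)/3, (n-2i+1)/3)` when `n - 2i ≡ 2 (mod 3)`
(equivalently `n + i ≡ 2 (mod 3)`), and `0` otherwise. -/
noncomputable def rr (n i : ℕ) : ℕ :=
  if (n + i) % 3 = 2 then
    sytCount [(n + i - 2) / 3, (n + i - 2) / 3, (n - 2 * i + 1) / 3]
  else 0

/-!
Removing the entry `n` from a standard Young tableau with at most three columns leaves a
standard Young tableau on `n - 1` cells, and putting `n` back into column `c` inverts this
whenever column `c` may grow. So tableaux with `n` in column `c` are counted by tableaux on
`n - 1` cells whose shape allows a new cell in column `c`. Growing the first, second or third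
column keeps, raises or lowers the difference of the second and third column lengths by one.
Every tableau counted by `β(n-1, i)` or `β(n-1, i+1)` accepts its new cell, and so does every
tableau counted by `β(n-1, i-1)` except those whose first two columns are equally long; their
shape is forced to be `((n+i-2)/3, (n+i-2)/3, (n-2i+1)/3)`, and they are counted by `r(n, i)`.
-/

lemma Set.Finite.ncard_eq_sum_ncard_fiber {α : Type*} {S : Set α} (hS : S.Finite)
    {f : α → ℕ} {k : ℕ} (hf : ∀ x ∈ S, f x < k) :
    S.ncard = ∑ c ∈ Finset.range k, {x ∈ S | f x = c}.ncard := by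
  classical
  rw [Set.ncard_eq_toFinset_card S hS,
    Finset.card_eq_sum_card_fiberwise fun x hx => Finset.mem_range.2 (hf x (by simpa using hx))]
  refine Finset.sum_congr rfl fun c _ => ?_
  rw [← Set.ncard_coe_finset]
  congr 1
  ext
  simp

namespace SYT

def IsShape (lam : List ℕ) : Prop := lam.Pairwise (· ≥ ·) ∧ ∀ x ∈ lam, 0 < x

variable {lam : List ℕ} {c k : ℕ}

lemma lt_length_of_getD_pos (h : 0 < lam.getD k 0) : k < lam.length := by
  by_contra hk
  rw [List.getD_eq_default _ _ (not_lt.1 hk)] at h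
  exact h.false

lemma mem_cells {p : ℕ × ℕ} : p ∈ Cells lam ↔ p.2 < lam.getD p.1 0 :=
  ⟨And.right, fun h => ⟨lt_length_of_getD_pos (p.2.zero_le.trans_lt h), h⟩⟩

lemma sum_eq_sum_getD {N : ℕ} (h : lam.length ≤ N) :
    lam.sum = ∑ k ∈ range N, lam.getD k 0 := by
  induction lam generalizing N with
  | nil => simp
  | cons a t ih =>
    obtain ⟨N, rfl⟩ : ∃ N', N = N' + 1 := ⟨N - 1, by rw [List.length_cons] at h; omega⟩
    rw [sum_range_succ', List.sum_cons, ih (by simpa using h)]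
    simp [add_comm]

namespace IsShape

lemma getD_pos (h : IsShape lam) (hk : k < lam.length) : 0 < lam.getD k 0 := by
  rw [List.getD_eq_getElem _ _ hk]
  exact h.2 _ (List.getElem_mem hk)

lemma getD_pos_iff (h : IsShape lam) : 0 < lam.getD k 0 ↔ k < lam.length :=
  ⟨lt_length_of_getD_pos, h.getD_pos⟩

lemma antitone_getD (h : IsShape lam) : Antitone (lam.getD · 0) := by
  intro j k hjk
  rcases lt_or_ge k lam.length with hk | hk
  · simp only [List.getD_eq_getElem _ _ hk, List.getD_eq_getElem _ _ (hjk.trans_lt hk)]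
    exact h.1.rel_get_of_le (a := ⟨j, hjk.trans_lt hk⟩) (b := ⟨k, hk⟩) hjk
  · exact (List.getD_eq_default _ _ hk).trans_le (Nat.zero_le _)

lemma ext_getD {lam' : List ℕ} (h : IsShape lam) (h' : IsShape lam')
    (hk : ∀ k, lam.getD k 0 = lam'.getD k 0) : lam = lam' := by
  have hlen : lam.length = lam'.length :=
    eq_of_forall_lt_iff fun k => by rw [← h.getD_pos_iff, ← h'.getD_pos_iff, hk]
  refine List.ext_getElem hlen fun k h1 h2 => ?_
  rw [← List.getD_eq_getElem _ 0 h1, ← List.getD_eq_getElem _ 0 h2, hk]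

end IsShape

lemma isShape_of_getD (hanti : ∀ k, lam.getD (k + 1) 0 ≤ lam.getD k 0)
    (hpos : ∀ x ∈ lam, 0 < x) : IsShape lam := by
  refine ⟨?_, hpos⟩
  rw [← List.isChain_iff_pairwise, List.isChain_iff_getElem]
  intro k hk
  simpa only [List.getD_eq_getElem _ _ hk, List.getD_eq_getElem _ _ (Nat.lt_of_succ_lt hk)]
    using hanti k

def Addable (lam : List ℕ) (c : ℕ) : Prop := c = 0 ∨ lam.getD c 0 < lam.getD (c - 1) 0

lemma Addable.le_length (hc : Addable lam c) : c ≤ lam.length := by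
  rcases hc with rfl | hc
  · exact Nat.zero_le _
  · have := lt_length_of_getD_pos ((Nat.zero_le _).trans_lt hc)
    omega

def addCell (lam : List ℕ) (c : ℕ) : List ℕ :=
  if c < lam.length then lam.set c (lam.getD c 0 + 1) else lam ++ [1]

-- `take c` drops the emptied column; this is right only when `c` is the last column.
def removeCell (lam : List ℕ) (c : ℕ) : List ℕ :=
  if lam.getD c 0 ≤ 1 then lam.take c else lam.set c (lam.getD c 0 - 1)

lemma getD_addCell (hc : c ≤ lam.length) (k : ℕ) :
    (addCell lam c).getD k 0 = lam.getD k 0 + if k = c then 1 else 0 := by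
  unfold addCell
  split_ifs <;> grind

lemma length_addCell (hc : c ≤ lam.length) :
    (addCell lam c).length = max lam.length (c + 1) := by
  unfold addCell
  split_ifs <;> simp only [List.length_set, List.length_append, List.length_singleton] <;> omega

lemma sum_addCell (hc : c ≤ lam.length) : (addCell lam c).sum = lam.sum + 1 := by
  have hN : (addCell lam c).length ≤ lam.length + 1 := by rw [length_addCell hc]; omega
  rw [sum_eq_sum_getD hN, sum_eq_sum_getD (Nat.le_succ _)]
  simp only [getD_addCell hc, sum_add_distrib, sum_ite_eq', mem_range]
  rw [if_pos (by omega)]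

lemma cells_addCell (hc : c ≤ lam.length) :
    Cells (addCell lam c) = insert (c, lam.getD c 0) (Cells lam) := by
  ext ⟨x, y⟩
  simp only [Set.mem_insert_iff, mem_cells, getD_addCell hc, Prod.mk.injEq]
  split_ifs with hx
  · subst hx
    omega
  · omega

lemma IsShape.addCell (h : IsShape lam) (hc : Addable lam c) : IsShape (addCell lam c) := by
  refine isShape_of_getD (fun k => ?_) fun x hx => ?_
  · have hanti : lam.getD (k + 1) 0 ≤ lam.getD k 0 := h.antitone_getD (Nat.le_succ k)
    simp only [getD_addCell hc.le_length]
    split_ifs with h1 <;> try omega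
    subst h1
    rcases hc with h0 | hc
    · omega
    · simpa using hc
  · unfold SYT.addCell at hx
    split_ifs at hx
    · rcases List.mem_or_eq_of_mem_set hx with hx | rfl
      exacts [h.2 x hx, Nat.succ_pos _]
    · rcases List.mem_append.1 hx with hx | hx
      exacts [h.2 x hx, by simp_all]

lemma length_removeCell_le : (removeCell lam c).length ≤ lam.length := by
  unfold removeCell
  split_ifs <;> simp

lemma getD_removeCell (h : IsShape lam) (hc : lam.getD (c + 1) 0 < lam.getD c 0) (k : ℕ) :
    (removeCell lam c).getD k 0 = lam.getD k 0 - if k = c then 1 else 0 := by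
  unfold removeCell
  by_cases h1 : lam.getD c 0 ≤ 1
  · rw [if_pos h1]
    rcases lt_or_ge c k with hk | hk
    · have : lam.getD k 0 ≤ lam.getD (c + 1) 0 := h.antitone_getD hk
      grind
    · grind
  · rw [if_neg h1]
    grind

lemma IsShape.removeCell (h : IsShape lam) (hc : lam.getD (c + 1) 0 < lam.getD c 0) :
    IsShape (removeCell lam c) := by
  refine isShape_of_getD (fun k => ?_) fun x hx => ?_
  · have hanti : lam.getD (k + 1) 0 ≤ lam.getD k 0 := h.antitone_getD (Nat.le_succ k)
    simp only [getD_removeCell h hc]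
    split_ifs <;> subst_vars <;> omega
  · unfold SYT.removeCell at hx
    split_ifs at hx
    · exact h.2 x (List.mem_of_mem_take hx)
    · rcases List.mem_or_eq_of_mem_set hx with hx | rfl
      exacts [h.2 x hx, by omega]

lemma addable_removeCell (h : IsShape lam) (hc : lam.getD (c + 1) 0 < lam.getD c 0) :
    Addable (removeCell lam c) c := by
  rcases Nat.eq_zero_or_pos c with h0 | h0
  · exact Or.inl h0
  · right
    have : lam.getD c 0 ≤ lam.getD (c - 1) 0 := h.antitone_getD (Nat.sub_le c 1)
    rw [getD_removeCell h hc, getD_removeCell h hc, if_pos rfl, if_neg (by omega)]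
    omega

lemma addCell_removeCell (h : IsShape lam) (hc : lam.getD (c + 1) 0 < lam.getD c 0) :
    addCell (removeCell lam c) c = lam := by
  have ha := addable_removeCell h hc
  refine ((h.removeCell hc).addCell ha).ext_getD h fun k => ?_
  rw [getD_addCell ha.le_length, getD_removeCell h hc]
  split_ifs with hk
  · subst hk
    omega
  · rfl

lemma removeCell_addCell (h : IsShape lam) (hc : Addable lam c) :
    removeCell (addCell lam c) c = lam := by
  have h' := h.addCell hc
  have hcorner : (addCell lam c).getD (c + 1) 0 < (addCell lam c).getD c 0 := by
    have : lam.getD (c + 1) 0 ≤ lam.getD c 0 := h.antitone_getD (Nat.le_succ c)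
    simp only [getD_addCell hc.le_length, if_pos, if_neg (Nat.succ_ne_self c)]
    omega
  refine (h'.removeCell hcorner).ext_getD h fun k => ?_
  rw [getD_removeCell h' hcorner, getD_addCell hc.le_length]
  simp

variable {T : ℕ × ℕ → ℕ}

lemma _root_.IsSYT.le_sum (hT : IsSYT lam T) {p : ℕ × ℕ} (hp : p ∈ Cells lam) :
    T p ≤ lam.sum :=
  (hT.1.mapsTo hp).2

lemma mk_getD_notMem_cells : (c, lam.getD c 0) ∉ Cells lam := by
  simp [mem_cells]

lemma _root_.IsSYT.update_addCell (h : IsShape lam) (hc : Addable lam c) (hT : IsSYT lam T) :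
    IsSYT (addCell lam c) (Function.update T (c, lam.getD c 0) (lam.sum + 1)) := by
  set p := (c, lam.getD c 0)
  have hcells : Cells (addCell lam c) = insert p (Cells lam) := cells_addCell hc.le_length
  have heq : Set.EqOn (Function.update T p (lam.sum + 1)) T (Cells lam) :=
    fun q hq => Function.update_of_ne (ne_of_mem_of_not_mem hq mk_getD_notMem_cells) _ _
  have hcorner : ∀ q ∈ Cells lam, c ≤ q.1 → lam.getD c 0 ≤ q.2 → False := by
    intro q hq h1 h2
    have : lam.getD q.1 0 ≤ lam.getD c 0 := h.antitone_getD h1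
    rw [mem_cells] at hq
    omega
  have hmono : ∀ q ∈ Cells (addCell lam c), ∀ q' ∈ Cells (addCell lam c),
      q.1 ≤ q'.1 → q.2 ≤ q'.2 → q ≠ q' → (q ∈ Cells lam → q' ∈ Cells lam → T q < T q') →
      Function.update T p (lam.sum + 1) q < Function.update T p (lam.sum + 1) q' := by
    rw [hcells]
    rintro q (rfl | hq) q' (rfl | hq') h1 h2 hne hlt
    · exact absurd rfl hne
    · exact (hcorner q' hq' h1 h2).elim
    · rw [heq hq, Function.update_self]
      exact Nat.lt_succ_of_le (hT.le_sum hq)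
    · rw [heq hq, heq hq']
      exact hlt hq hq'
  refine ⟨?_, fun q hq q' hq' h1 h2 => hmono q hq q' hq' h1.le h2.le
      (ne_of_apply_ne Prod.snd h2.ne) (fun hq hq' => hT.2.1 q hq q' hq' h1 h2),
    fun q hq q' hq' h1 h2 => hmono q hq q' hq' h2.le h1.le
      (ne_of_apply_ne Prod.fst h2.ne) (fun hq hq' => hT.2.2.1 q hq q' hq' h1 h2), ?_⟩
  · rw [hcells, sum_addCell hc.le_length, ← Set.insert_Icc_right_eq_Icc_add_one (by omega)]
    simpa using (hT.1.congr heq.symm).insert (a := p) (by simp)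
  · intro q hq
    rw [hcells] at hq
    rw [Function.update_of_ne (by rintro rfl; exact hq (Set.mem_insert _ _)),
      hT.2.2.2 q (fun h => hq (Set.mem_insert_of_mem _ h))]

lemma _root_.IsSYT.update_of_addCell (hc : Addable lam c) (hT : IsSYT (addCell lam c) T)
    (hmax : T (c, lam.getD c 0) = lam.sum + 1) :
    IsSYT lam (Function.update T (c, lam.getD c 0) 0) := by
  set p := (c, lam.getD c 0)
  have heq : Set.EqOn (Function.update T p 0) T (Cells lam) :=
    fun q hq => Function.update_of_ne (ne_of_mem_of_not_mem hq mk_getD_notMem_cells) _ _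
  obtain ⟨hbij, hcol, hrow, hzero⟩ := hT
  have hcells : Cells (addCell lam c) = insert p (Cells lam) := cells_addCell hc.le_length
  rw [hcells] at hbij hcol hrow hzero
  refine ⟨?_, fun q hq q' hq' => ?_, fun q hq q' hq' => ?_, fun q hq => ?_⟩
  · rw [sum_addCell hc.le_length, ← Set.insert_Icc_right_eq_Icc_add_one (by omega), ← hmax]
      at hbij
    exact ((Set.BijOn.insert_iff mk_getD_notMem_cells (by rw [hmax]; simp)).1 hbij).congr
      heq.symm
  · rw [heq hq, heq hq']
    exact hcol q (Set.mem_insert_of_mem _ hq) q' (Set.mem_insert_of_mem _ hq')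
  · rw [heq hq, heq hq']
    exact hrow q (Set.mem_insert_of_mem _ hq) q' (Set.mem_insert_of_mem _ hq')
  · by_cases hqp : q = p
    · rw [hqp, Function.update_self]
    · rw [Function.update_of_ne hqp]
      exact hzero q fun h => (Set.mem_insert_iff.1 h).elim hqp hq

lemma _root_.IsSYT.corner_of_eq_sum_s8 (hT : IsSYT lam T) {p : ℕ × ℕ} (hp : p ∈ Cells lam)
    (hmax : T p = lam.sum) : lam.getD (p.1 + 1) 0 ≤ p.2 ∧ p.2 + 1 = lam.getD p.1 0 := by
  have hlarger : ∀ q ∈ Cells lam, ¬ T p < T q := fun q hq hlt =>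
    (hmax ▸ hlt).not_ge (hT.le_sum hq)
  rw [mem_cells] at hp
  constructor
  · by_contra! hlt
    exact hlarger (p.1 + 1, p.2) (mem_cells.2 hlt)
      (hT.2.2.1 p (mem_cells.2 hp) _ (mem_cells.2 hlt) rfl (Nat.lt_succ_self _))
  · by_contra hne
    have hlt : p.2 + 1 < lam.getD p.1 0 := by omega
    exact hlarger (p.1, p.2 + 1) (mem_cells.2 hlt)
      (hT.2.1 p (mem_cells.2 hp) _ (mem_cells.2 hlt) rfl (Nat.lt_succ_self _))

abbrev Tableau := List ℕ × (ℕ × ℕ → ℕ)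

def tableaux (s n : ℕ) : Set Tableau :=
  {q | q.1.length ≤ s ∧ IsShape q.1 ∧ q.1.sum = n ∧ IsSYT q.1 q.2}

noncomputable def maxCell (q : Tableau) : ℕ × ℕ := Function.invFunOn q.2 (Cells q.1) q.1.sum

noncomputable def removeMax (q : Tableau) : Tableau :=
  (removeCell q.1 (maxCell q).1, Function.update q.2 (maxCell q) 0)

def addMax (c : ℕ) (q : Tableau) : Tableau :=
  (addCell q.1 c, Function.update q.2 (c, q.1.getD c 0) (q.1.sum + 1))

lemma maxCell_spec {q : Tableau} (hT : IsSYT q.1 q.2) (hpos : 0 < q.1.sum) :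
    maxCell q ∈ Cells q.1 ∧ q.2 (maxCell q) = q.1.sum :=
  have hex := hT.1.surjOn ⟨hpos, le_rfl⟩
  ⟨Function.invFunOn_mem hex, Function.invFunOn_eq hex⟩

variable {s m : ℕ} {q : Tableau}

lemma removeMax_spec (hq : q ∈ tableaux s (m + 1)) :
    removeMax q ∈ tableaux s m ∧ Addable (removeMax q).1 (maxCell q).1 ∧
      addMax (maxCell q).1 (removeMax q) = q := by
  obtain ⟨hlen, h, hsum, hT⟩ : q.1.length ≤ s ∧ IsShape q.1 ∧ q.1.sum = m + 1 ∧ IsSYT q.1 q.2 :=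
    hq
  obtain ⟨hp, hmax⟩ := maxCell_spec hT (by omega)
  obtain ⟨hcorner, htop⟩ := hT.corner_of_eq_sum_s8 hp hmax
  set c := (maxCell q).1
  have hc : q.1.getD (c + 1) 0 < q.1.getD c 0 := by omega
  have ha := addable_removeCell h hc
  have hadd := addCell_removeCell h hc
  have hsum' : (removeCell q.1 c).sum + 1 = q.1.sum := by rw [← sum_addCell ha.le_length, hadd]
  have hcell : maxCell q = (c, (removeCell q.1 c).getD c 0) := by
    rw [getD_removeCell h hc, if_pos rfl]
    refine Prod.ext rfl ?_
    show (maxCell q).2 = q.1.getD c 0 - 1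
    omega
  have hT' : IsSYT (removeMax q).1 (removeMax q).2 := by
    change IsSYT (removeCell q.1 c) (Function.update q.2 (maxCell q) 0)
    rw [hcell]
    exact IsSYT.update_of_addCell ha (by rwa [hadd]) (by rw [← hcell, hmax, hsum'])
  refine ⟨⟨length_removeCell_le.trans hlen, h.removeCell hc,
    by change (removeCell q.1 c).sum = m; omega, hT'⟩, ha, Prod.ext hadd ?_⟩
  change Function.update (Function.update q.2 (maxCell q) 0) (c, (removeCell q.1 c).getD c 0)
    ((removeCell q.1 c).sum + 1) = q.2
  rw [← hcell, Function.update_idem, hsum', ← hmax, Function.update_eq_self]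

lemma addMax_spec {c : ℕ} (hq : q ∈ tableaux s m) (hc : c < s) (ha : Addable q.1 c) :
    addMax c q ∈ tableaux s (m + 1) ∧ (maxCell (addMax c q)).1 = c ∧
      removeMax (addMax c q) = q := by
  obtain ⟨hlen, h, hsum, hT⟩ : q.1.length ≤ s ∧ IsShape q.1 ∧ q.1.sum = m ∧ IsSYT q.1 q.2 := hq
  have hT' : IsSYT (addMax c q).1 (addMax c q).2 := hT.update_addCell h ha
  have hsum' : (addMax c q).1.sum = m + 1 := by rw [← hsum]; exact sum_addCell ha.le_length
  have hcell : maxCell (addMax c q) = (c, q.1.getD c 0) := by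
    obtain ⟨h1, h2⟩ := maxCell_spec hT' (by omega)
    refine hT'.1.injOn h1 (cells_addCell ha.le_length ▸ Set.mem_insert _ _) ?_
    rw [h2, hsum']
    simp [addMax, hsum]
  refine ⟨⟨(length_addCell ha.le_length).trans_le (max_le hlen hc), h.addCell ha, hsum', hT'⟩,
    by rw [hcell], ?_⟩
  rw [removeMax, hcell]
  refine Prod.ext (removeCell_addCell h ha) ?_
  change Function.update (Function.update q.2 _ _) _ 0 = q.2
  rw [Function.update_idem, Function.update_eq_self_iff]
  exact (hT.2.2.2 _ mk_getD_notMem_cells).symm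

lemma maxCell_fst_lt (hq : q ∈ tableaux s (m + 1)) : (maxCell q).1 < s :=
  (maxCell_spec hq.2.2.2 (by rw [hq.2.2.1]; omega)).1.1.trans_le hq.1

lemma finite_tableaux (s : ℕ) : ∀ m, (tableaux s m).Finite
  | 0 => (Set.finite_singleton ([], 0)).subset fun q hq => by
    obtain ⟨-, h, hsum, hT⟩ := hq
    have hnil : q.1 = [] := List.eq_nil_iff_forall_not_mem.2 fun x hx =>
      (h.2 x hx).ne' (List.sum_eq_zero_iff.1 hsum x hx)
    refine Prod.ext hnil (funext fun p => hT.2.2.2 p ?_)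
    simp [hnil, Cells]
  | m + 1 => ((Set.finite_lt_nat s).biUnion fun c _ =>
      (finite_tableaux s m).image (addMax c)).subset fun q hq =>
    Set.mem_iUnion₂.2 ⟨(maxCell q).1, maxCell_fst_lt hq,
      removeMax q, (removeMax_spec hq).1, (removeMax_spec hq).2.2⟩

lemma ncard_sep_maxCell_eq (P : List ℕ → Prop) {c : ℕ} (hc : c < s) :
    {q ∈ tableaux s (m + 1) | P q.1 ∧ (maxCell q).1 = c}.ncard =
      {q ∈ tableaux s m | Addable q.1 c ∧ P (addCell q.1 c)}.ncard := by
  refine Set.BijOn.ncard_eq (Set.InvOn.bijOn (f := removeMax) (f' := addMax c) ⟨?_, ?_⟩ ?_ ?_)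
  · rintro q ⟨hq, -, rfl⟩
    exact (removeMax_spec hq).2.2
  · rintro q ⟨hq, ha, -⟩
    exact (addMax_spec hq hc ha).2.2
  · rintro q ⟨hq, hP, rfl⟩
    obtain ⟨hmem, ha, hadd⟩ := removeMax_spec hq
    exact ⟨hmem, ha, by rwa [← congrArg Prod.fst hadd] at hP⟩
  · rintro q ⟨hq, ha, hP⟩
    obtain ⟨hmem, hc', -⟩ := addMax_spec hq hc ha
    exact ⟨hmem, hP, hc'⟩

lemma ncard_tableaux_sep (P : List ℕ → Prop) :
    {q ∈ tableaux s (m + 1) | P q.1}.ncard =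
      ∑ c ∈ range s, {q ∈ tableaux s m | Addable q.1 c ∧ P (addCell q.1 c)}.ncard := by
  rw [((finite_tableaux s (m + 1)).sep _).ncard_eq_sum_ncard_fiber fun q hq => maxCell_fst_lt hq.1]
  refine sum_congr rfl fun c hc => ?_
  rw [← ncard_sep_maxCell_eq P (mem_range.1 hc)]
  congr 1
  ext q
  simp only [Set.mem_ofPred_eq, and_assoc]

lemma Y_eq_sep (s n i : ℕ) : Y s n i = {q ∈ tableaux s n | q.1.getD 1 0 - q.1.getD 2 0 = i} := by
  ext q
  simp only [Y, tableaux, IsShape, Set.mem_ofPred_eq]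
  tauto

lemma gamma_succ (s m i : ℕ) :
    gamma s (m + 1) i = ∑ c ∈ range s, {q ∈ tableaux s m | Addable q.1 c ∧
      (addCell q.1 c).getD 1 0 - (addCell q.1 c).getD 2 0 = i}.ncard := by
  rw [gamma, Nat.card_coe_set_eq, Y_eq_sep]
  exact ncard_tableaux_sep fun l => l.getD 1 0 - l.getD 2 0 = i

lemma sep_addable_zero (s m i : ℕ) :
    {q ∈ tableaux s m | Addable q.1 0 ∧
      (addCell q.1 0).getD 1 0 - (addCell q.1 0).getD 2 0 = i} = Y s m i := by
  ext q
  simp only [Y_eq_sep, Set.mem_ofPred_eq, getD_addCell (Nat.zero_le _), Addable, true_or,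
    true_and, one_ne_zero, OfNat.ofNat_ne_zero, if_false, add_zero]

lemma sep_addable_one (s m : ℕ) {i : ℕ} (hi : 1 ≤ i) :
    {q ∈ tableaux s m | Addable q.1 1 ∧
      (addCell q.1 1).getD 1 0 - (addCell q.1 1).getD 2 0 = i} =
      Y s m (i - 1) ∩ {q : Tableau | q.1.getD 1 0 < q.1.getD 0 0} := by
  ext q
  simp only [Y_eq_sep, Set.mem_inter_iff, Set.mem_ofPred_eq, and_assoc]
  refine and_congr_right fun hq => ?_
  have hanti : q.1.getD 2 0 ≤ q.1.getD 1 0 := hq.2.1.antitone_getD (by norm_num)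
  have haddable : Addable q.1 1 ↔ q.1.getD 1 0 < q.1.getD 0 0 := by simp [Addable]
  constructor
  · rintro ⟨ha, hdiff⟩
    rw [getD_addCell ha.le_length, getD_addCell ha.le_length] at hdiff
    simp only [if_pos, if_neg (show (2 : ℕ) ≠ 1 by norm_num)] at hdiff
    exact ⟨by omega, haddable.1 ha⟩
  · rintro ⟨hdiff, hlt⟩
    have ha := haddable.2 hlt
    refine ⟨ha, ?_⟩
    rw [getD_addCell ha.le_length, getD_addCell ha.le_length]
    simp only [if_pos, if_neg (show (2 : ℕ) ≠ 1 by norm_num)]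
    omega

lemma sep_addable_two (s m i : ℕ) :
    {q ∈ tableaux s m | Addable q.1 2 ∧
      (addCell q.1 2).getD 1 0 - (addCell q.1 2).getD 2 0 = i} = Y s m (i + 1) := by
  ext q
  simp only [Y_eq_sep, Set.mem_ofPred_eq]
  refine and_congr_right fun hq => ?_
  have haddable : Addable q.1 2 ↔ q.1.getD 2 0 < q.1.getD 1 0 := by simp [Addable]
  constructor
  · rintro ⟨ha, hdiff⟩
    rw [getD_addCell ha.le_length, getD_addCell ha.le_length] at hdiff
    simp only [if_pos, if_neg (show (1 : ℕ) ≠ 2 by norm_num)] at hdiff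
    have := haddable.1 ha
    omega
  · intro hdiff
    have ha := haddable.2 (by omega)
    refine ⟨ha, ?_⟩
    rw [getD_addCell ha.le_length, getD_addCell ha.le_length]
    simp only [if_pos, if_neg (show (1 : ℕ) ≠ 2 by norm_num)]
    omega

lemma mem_Y_sdiff_iff {n i : ℕ} (hi : 1 ≤ i) (hi' : i ≤ n / 2) {q : Tableau} :
    q ∈ Y 3 (n - 1) (i - 1) \ {q : Tableau | q.1.getD 1 0 < q.1.getD 0 0} ↔
      (n + i) % 3 = 2 ∧
        q.1 = [(n + i - 2) / 3, (n + i - 2) / 3, (n - 2 * i + 1) / 3] ∧ IsSYT q.1 q.2 := by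
  rw [Y_eq_sep]
  simp only [Set.mem_sdiff, Set.mem_ofPred_eq, not_lt]
  constructor
  · rintro ⟨⟨⟨hlen, h, hsum, hT⟩, hdiff⟩, hge⟩
    have h01 : q.1.getD 1 0 ≤ q.1.getD 0 0 := h.antitone_getD (by norm_num)
    have h12 : q.1.getD 2 0 ≤ q.1.getD 1 0 := h.antitone_getD (by norm_num)
    rw [sum_eq_sum_getD hlen] at hsum
    simp only [sum_range_succ, sum_range_zero, zero_add] at hsum
    have hlen3 : q.1.length = 3 := le_antisymm hlen (lt_length_of_getD_pos (by omega))
    obtain ⟨a, b, c, hq⟩ := List.length_eq_three.1 hlen3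
    rw [hq] at hsum hdiff hge h01 h12 ⊢
    simp only [List.getD_cons_zero, List.getD_cons_succ] at hsum hdiff hge h01 h12
    refine ⟨by omega, by simp only [List.cons.injEq, and_true]; omega, hq ▸ hT⟩
  · rintro ⟨hmod, hq, hT⟩
    refine ⟨⟨⟨?_, ?_, ?_, hT⟩, ?_⟩, ?_⟩ <;> rw [hq]
    · simp
    · simp only [IsShape, List.pairwise_cons, List.mem_cons, List.not_mem_nil, or_false,
        forall_eq_or_imp, forall_eq, IsEmpty.forall_iff, implies_true, List.Pairwise.nil, and_true]
      omega
    · simp only [List.sum_cons, List.sum_nil]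
      omega
    · simp only [List.getD_cons_succ, List.getD_cons_zero]
      omega
    · simp

lemma ncard_Y_sdiff_eq_rr {n i : ℕ} (hi : 1 ≤ i) (hi' : i ≤ n / 2) :
    (Y 3 (n - 1) (i - 1) \ {q : Tableau | q.1.getD 1 0 < q.1.getD 0 0}).ncard = rr n i := by
  set L := [(n + i - 2) / 3, (n + i - 2) / 3, (n - 2 * i + 1) / 3]
  have hset : Y 3 (n - 1) (i - 1) \ {q : Tableau | q.1.getD 1 0 < q.1.getD 0 0} =
      {q | (n + i) % 3 = 2 ∧ q.1 = L ∧ IsSYT q.1 q.2} :=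
    Set.ext fun q => mem_Y_sdiff_iff hi hi'
  rw [hset, rr]
  split_ifs with hmod
  · have himage : {q : Tableau | (n + i) % 3 = 2 ∧ q.1 = L ∧ IsSYT q.1 q.2} =
        Prod.mk L '' {T | IsSYT L T} := by
      ext ⟨l, T⟩
      simp only [hmod, true_and, Set.mem_ofPred_eq, Set.mem_image, Prod.mk.injEq]
      constructor
      · rintro ⟨rfl, hT⟩
        exact ⟨T, hT, rfl, rfl⟩
      · rintro ⟨T, hT, rfl, rfl⟩
        exact ⟨rfl, hT⟩
    rw [himage, Set.ncard_image_of_injective _ (Prod.mk_right_injective L), sytCount,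
      ← Nat.card_coe_set_eq]
    rfl
  · simp [hmod]

end SYT

open SYT in
theorem stmt8_general (n i : ℕ) (hi : 1 ≤ i) (hi' : i ≤ n / 2) :
    gamma 3 n i + rr n i =
      gamma 3 (n - 1) (i - 1) + gamma 3 (n - 1) i + gamma 3 (n - 1) (i + 1) := by
  obtain ⟨m, rfl⟩ : ∃ m, n = m + 1 := ⟨n - 1, by omega⟩
  have hsplit := Set.ncard_inter_add_ncard_sdiff_eq_ncard (Y 3 m (i - 1))
    {q : Tableau | q.1.getD 1 0 < q.1.getD 0 0}
    ((finite_tableaux 3 m).subset fun q hq => by rw [Y_eq_sep] at hq; exact hq.1)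
  rw [gamma_succ, sum_range_succ, sum_range_succ, sum_range_one,
    sep_addable_zero, sep_addable_one 3 m hi, sep_addable_two, ← ncard_Y_sdiff_eq_rr hi hi']
  simp only [gamma, Nat.card_coe_set_eq, Nat.add_sub_cancel]
  omega

theorem stmt8 (n i : ℕ) (hn : 1 ≤ n) (hi : 1 ≤ i) (hi' : i ≤ n / 2) :
    gamma 3 n i + rr n i =
      gamma 3 (n - 1) (i - 1) + gamma 3 (n - 1) i + gamma 3 (n - 1) (i + 1) :=
  stmt8_general n i hi hi'
end
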